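/- arXiv:1303.1241 — 9 statements merged into one kernel-verified Lean document; each statement's English description precedes it below -/
import Mathlib

section
/- Let X be a real normed space, let Γ : X → ℝ be a nonzero continuous linear functional, and let (φ_i)_{i≥1} be a complete system in X with Γ(φ₁) ≠ 0. Define φ̃_i := φ_i − (Γ(φ_i)/Γ(φ₁))·φ₁ for i ≥ 1. Then every φ̃_i lies in ker Γ, the linear span of {φ̃_i : i ≥ 1} is dense in ker Γ, and quantitatively: for every u ∈ ker Γ, every ε > 0, every N and coefficients a₁,…,a_N with ‖u − Σ_{i=1}^N a_i φ_i‖ ≤ ε, one has ‖u − Σ_{i=1}^N a_i φ̃_i‖ ≤ (1 + ‖Γ‖·‖φ₁‖/|Γ(φ₁)|)·ε. -/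
open Finset

/-!
The map `P x = x - (Γ x / Γ φ₁) • φ₁` is a continuous linear projection of `X` onto `ker Γ`
with `‖P‖ ≤ 1 + ‖Γ‖ ‖φ₁‖ / |Γ φ₁|`, and `φ̃ = P ∘ φ`. A projection maps a dense span onto a
dense subset of its range, and maps an approximation `u ≈ ∑ aᵢ φᵢ` of `u ∈ ker Γ` to
`u ≈ ∑ aᵢ φ̃ᵢ`, losing at most the factor `‖P‖`.
-/

namespace ContinuousLinearMap

section

variable {R E F : Type*} [Semiring R] [TopologicalSpace E] [AddCommMonoid E] [Module R E]
  [TopologicalSpace F] [AddCommMonoid F] [Module R F]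

theorem range_subset_closure_span_image (P : E →L[R] F) {s : Set E}
    (hs : Dense (Submodule.span R s : Set E)) :
    Set.range P ⊆ closure (Submodule.span R (P '' s)) := by
  rintro _ ⟨x, rfl⟩
  refine closure_mono (Submodule.image_span_subset_span (P : E →ₗ[R] F) s) ?_
  exact image_closure_subset_closure_image P.continuous ⟨x, hs.closure_eq ▸ trivial, rfl⟩

end

variable {𝕜 X : Type*} [NontriviallyNormedField 𝕜] [NormedAddCommGroup X] [NormedSpace 𝕜 X]

/-- Projection onto `ker Γ` along `e`; it is the identity when `Γ e = 0`. -/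
noncomputable def kerProj (Γ : X →L[𝕜] 𝕜) (e : X) : X →L[𝕜] X :=
  ContinuousLinearMap.id 𝕜 X - Γ.smulRight ((Γ e)⁻¹ • e)

variable (Γ : X →L[𝕜] 𝕜) (e : X)

theorem kerProj_apply (x : X) : kerProj Γ e x = x - (Γ x / Γ e) • e := by
  simp [kerProj, smul_smul, div_eq_mul_inv]

theorem kerProj_apply_mem_ker (he : Γ e ≠ 0) (x : X) : Γ (kerProj Γ e x) = 0 := by
  simp [kerProj_apply, div_mul_cancel₀ _ he]

theorem kerProj_apply_of_mem_ker {x : X} (hx : Γ x = 0) : kerProj Γ e x = x := by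
  simp [kerProj_apply, hx]

theorem range_kerProj (he : Γ e ≠ 0) :
    Set.range (kerProj Γ e) = LinearMap.ker (Γ : X →ₗ[𝕜] 𝕜) := by
  ext x
  constructor
  · rintro ⟨y, rfl⟩
    exact kerProj_apply_mem_ker Γ e he y
  · intro hx
    exact ⟨x, kerProj_apply_of_mem_ker Γ e hx⟩

theorem norm_kerProj_apply_le (x : X) :
    ‖kerProj Γ e x‖ ≤ (1 + ‖Γ‖ * ‖e‖ / ‖Γ e‖) * ‖x‖ := by
  have hcorr : ‖(Γ x / Γ e) • e‖ ≤ ‖Γ‖ * ‖e‖ / ‖Γ e‖ * ‖x‖ := by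
    rw [norm_smul, norm_div, div_mul_eq_mul_div, div_mul_eq_mul_div, mul_right_comm]
    gcongr
    exact Γ.le_opNorm x
  calc ‖kerProj Γ e x‖ ≤ ‖x‖ + ‖(Γ x / Γ e) • e‖ := by
        rw [kerProj_apply]; exact norm_sub_le _ _
    _ ≤ (1 + ‖Γ‖ * ‖e‖ / ‖Γ e‖) * ‖x‖ := by linarith

theorem closure_span_image_kerProj (he : Γ e ≠ 0) {s : Set X}
    (hs : Dense (Submodule.span 𝕜 s : Set X)) :
    closure (Submodule.span 𝕜 (kerProj Γ e '' s) : Set X) = LinearMap.ker (Γ : X →ₗ[𝕜] 𝕜) := by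
  refine subset_antisymm (closure_minimal (Submodule.span_le.2 ?_) Γ.isClosed_ker) ?_
  · rintro _ ⟨x, -, rfl⟩
    exact kerProj_apply_mem_ker Γ e he x
  · rw [← range_kerProj Γ e he]
    exact (kerProj Γ e).range_subset_closure_span_image hs

theorem norm_sub_sum_kerProj_le {ι : Type*} (t : Finset ι) (a : ι → 𝕜) (φ : ι → X)
    {u : X} (hu : Γ u = 0) :
    ‖u - ∑ i ∈ t, a i • kerProj Γ e (φ i)‖ ≤
      (1 + ‖Γ‖ * ‖e‖ / ‖Γ e‖) * ‖u - ∑ i ∈ t, a i • φ i‖ := by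
  have hP : u - ∑ i ∈ t, a i • kerProj Γ e (φ i) = kerProj Γ e (u - ∑ i ∈ t, a i • φ i) := by
    simp only [map_sub, map_sum, map_smul, kerProj_apply_of_mem_ker Γ e hu]
  rw [hP]
  exact norm_kerProj_apply_le Γ e _

end ContinuousLinearMap

theorem stmt0_general {X : Type*} [NormedAddCommGroup X] [NormedSpace ℝ X]
    (Γ : X →L[ℝ] ℝ)
    (φ : ℕ → X)
    (hcomplete : Dense (Submodule.span ℝ (φ '' {i | 1 ≤ i}) : Set X))
    (hφ1 : Γ (φ 1) ≠ 0)
    (φt : ℕ → X)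
    (hφt : ∀ i, φt i = φ i - (Γ (φ i) / Γ (φ 1)) • φ 1) :
    (∀ i, 1 ≤ i → φt i ∈ LinearMap.ker (Γ : X →ₗ[ℝ] ℝ)) ∧
    closure (Submodule.span ℝ (φt '' {i | 1 ≤ i}) : Set X) = (LinearMap.ker (Γ : X →ₗ[ℝ] ℝ) : Set X) ∧
    (∀ u ∈ LinearMap.ker (Γ : X →ₗ[ℝ] ℝ), ∀ ε > (0:ℝ), ∀ N : ℕ, ∀ a : ℕ → ℝ,
      ‖u - ∑ i ∈ Icc 1 N, a i • φ i‖ ≤ ε →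
      ‖u - ∑ i ∈ Icc 1 N, a i • φt i‖ ≤ (1 + ‖Γ‖ * ‖φ 1‖ / |Γ (φ 1)|) * ε) := by
  obtain rfl : φt = Γ.kerProj (φ 1) ∘ φ :=
    funext fun i => (hφt i).trans (Γ.kerProj_apply (φ 1) (φ i)).symm
  refine ⟨fun i _ => Γ.kerProj_apply_mem_ker (φ 1) hφ1 (φ i), ?_, ?_⟩
  · rw [Set.image_comp]
    exact Γ.closure_span_image_kerProj (φ 1) hφ1 hcomplete
  · intro u hu ε _ N a hε
    have hfactor : 0 ≤ 1 + ‖Γ‖ * ‖φ 1‖ / |Γ (φ 1)| := by positivity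
    calc _ ≤ (1 + ‖Γ‖ * ‖φ 1‖ / |Γ (φ 1)|) * ‖u - ∑ i ∈ Icc 1 N, a i • φ i‖ :=
          Γ.norm_sub_sum_kerProj_le (φ 1) _ a φ hu
      _ ≤ _ := mul_le_mul_of_nonneg_left hε hfactor

/-- Step of Lemma 1 of the paper: from a complete system `φ` in `X` with `Γ φ₁ ≠ 0`
one builds the system `φ̃ᵢ = φᵢ - (Γ φᵢ / Γ φ₁) φ₁` which lies in `ker Γ`, is
complete in `ker Γ`, and satisfies a quantitative approximation estimate. -/
theorem stmt0 {X : Type*} [NormedAddCommGroup X] [NormedSpace ℝ X]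
    (Γ : X →L[ℝ] ℝ) (hΓ : Γ ≠ 0)
    (φ : ℕ → X)
    (hcomplete : Dense (Submodule.span ℝ (φ '' {i | 1 ≤ i}) : Set X))
    (hφ1 : Γ (φ 1) ≠ 0)
    (φt : ℕ → X)
    (hφt : ∀ i, φt i = φ i - (Γ (φ i) / Γ (φ 1)) • φ 1) :
    (∀ i, 1 ≤ i → φt i ∈ LinearMap.ker (Γ : X →ₗ[ℝ] ℝ)) ∧
    closure (Submodule.span ℝ (φt '' {i | 1 ≤ i}) : Set X) = (LinearMap.ker (Γ : X →ₗ[ℝ] ℝ) : Set X) ∧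
    (∀ u ∈ LinearMap.ker (Γ : X →ₗ[ℝ] ℝ), ∀ ε > (0:ℝ), ∀ N : ℕ, ∀ a : ℕ → ℝ,
      ‖u - ∑ i ∈ Icc 1 N, a i • φ i‖ ≤ ε →
      ‖u - ∑ i ∈ Icc 1 N, a i • φt i‖ ≤ (1 + ‖Γ‖ * ‖φ 1‖ / |Γ (φ 1)|) * ε) :=
  stmt0_general Γ φ hcomplete hφ1 φt hφt
end

section
/- Let X be a real normed space, let Γ₁, …, Γ_s : X → ℝ be continuous linear functionals, let Ů := {u ∈ X | Γ₁(u) = ⋯ = Γ_s(u) = 0}, and let (φ_i)_{i≥1} be a complete system in X. Then there exists a sequence (φ̃_j) of finite linear combinations of the φ_i such that every φ̃_j belongs to Ů and the system (φ̃_j) is complete in Ů, i.e. the linear span of {φ̃_j} is dense in Ů. -/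
set_option synthInstance.maxHeartbeats 1000000 in
/-- Lemma 1 of the paper: given finitely many continuous linear functionals
`Γ₁, …, Γ_s` on a normed space `X` and a complete system `(φᵢ)` in `X`, there is a
system of finite linear combinations of the `φᵢ` lying in
`Ů = {u | Γ₁ u = ⋯ = Γ_s u = 0}` which is complete in `Ů`. -/
theorem stmt1 {X : Type*} [NormedAddCommGroup X] [NormedSpace ℝ X]
    (s : ℕ) (Γ : Fin s → (X →L[ℝ] ℝ))
    (φ : ℕ → X)
    (hcomplete : Dense (Submodule.span ℝ (φ '' {i | 1 ≤ i}) : Set X)) :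
    ∃ φt : ℕ → X,
      (∀ j, φt j ∈ Submodule.span ℝ (φ '' {i | 1 ≤ i})) ∧
      (∀ j, ∀ k : Fin s, Γ k (φt j) = 0) ∧
      (∀ u : X, (∀ k : Fin s, Γ k u = 0) →
        u ∈ closure (Submodule.span ℝ (Set.range φt) : Set X)) := by
  classical
  set S : Submodule ℝ X := Submodule.span ℝ (φ '' {i | 1 ≤ i}) with hSdef
  set G : X →L[ℝ] (Fin s → ℝ) := ContinuousLinearMap.pi Γ with hGdef
  set V : Submodule ℝ (Fin s → ℝ) := S.map (G : X →ₗ[ℝ] (Fin s → ℝ)) with hVdef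
  have hVclosed : IsClosed (V : Set (Fin s → ℝ)) :=
    Submodule.closed_of_finiteDimensional V
  have hmem : ∀ x : X, G x ∈ V := by
    intro x
    have hx : x ∈ closure (S : Set X) := hcomplete x
    have h1 : G x ∈ G '' closure (S : Set X) := ⟨x, hx, rfl⟩
    have h2 : G '' closure (S : Set X) ⊆ closure (G '' (S : Set X)) :=
      image_closure_subset_closure_image G.continuous
    have h3 : (G '' (S : Set X)) = (V : Set (Fin s → ℝ)) := rfl
    have := h2 h1
    rw [h3, hVclosed.closure_eq] at this
    exact this
  -- a basis of V and preimages in S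
  let b := Module.finBasis ℝ V
  have hbi : ∀ i, ∃ x, x ∈ S ∧ G x = (b i : Fin s → ℝ) := by
    intro i
    obtain ⟨x, hx, hGx⟩ := (b i).2
    exact ⟨x, hx, hGx⟩
  choose xb hxbS hxbG using hbi
  let g : V →ₗ[ℝ] X := b.constr ℝ xb
  have hgS : ∀ v : V, g v ∈ S := by
    intro v
    have : g v = ∑ i, b.equivFun v i • xb i := b.constr_apply_fintype ℝ xb v
    rw [this]
    exact Submodule.sum_mem _ fun i _ => Submodule.smul_mem _ _ (hxbS i)
  have hGg : ∀ v : V, G (g v) = (v : Fin s → ℝ) := by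
    have hcomp : (G : X →ₗ[ℝ] (Fin s → ℝ)) ∘ₗ g = V.subtype := by
      apply b.ext
      intro i
      simp [g, Module.Basis.constr_basis, hxbG i]
    intro v
    exact congrArg (fun f => f v) hcomp
  -- the corrected system
  set φt : ℕ → X := fun j => φ (j + 1) - g ⟨G (φ (j + 1)), hmem _⟩ with hφt
  have hφS : ∀ j, φ (j + 1) ∈ S := fun j =>
    Submodule.subset_span ⟨j + 1, by simp, rfl⟩
  refine ⟨φt, fun j => sub_mem (hφS j) (hgS _), ?_, ?_⟩
  · intro j k
    have hGφt : G (φt j) = 0 := by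
      simp only [hφt, map_sub, hGg ⟨G (φ (j + 1)), hmem _⟩, sub_self]
    have : Γ k (φt j) = G (φt j) k := rfl
    rw [this, hGφt]; rfl
  · intro u hu
    -- projection map
    let Pl : X →ₗ[ℝ] X :=
      LinearMap.id - g ∘ₗ LinearMap.codRestrict V (G : X →ₗ[ℝ] (Fin s → ℝ)) hmem
    have hPl : ∀ x, Pl x = x - g ⟨G x, hmem x⟩ := fun x => rfl
    have hPlcont : Continuous Pl := by
      have hgc : Continuous g := g.continuous_of_finiteDimensional
      have : Continuous fun x : X => g ⟨G x, hmem x⟩ :=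
        hgc.comp (G.continuous.subtype_mk hmem)
      exact continuous_id.sub this
    have hGu : G u = 0 := funext hu
    have hPlu : Pl u = u := by
      rw [hPl]
      have : (⟨G u, hmem u⟩ : V) = 0 := Subtype.ext hGu
      rw [this, map_zero, sub_zero]
    have hmap : S.map Pl ≤ Submodule.span ℝ (Set.range φt) := by
      rw [hSdef, Submodule.map_span]
      apply Submodule.span_le.2
      rintro _ ⟨_, ⟨i, hi, rfl⟩, rfl⟩
      have hi' : 1 ≤ i := hi
      obtain ⟨j, rfl⟩ : ∃ j, i = j + 1 := ⟨i - 1, (Nat.succ_pred_eq_of_pos hi').symm⟩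
      exact Submodule.subset_span ⟨j, rfl⟩
    have hu' : u ∈ Pl '' closure (S : Set X) := ⟨u, hcomplete u, hPlu⟩
    have h2 : Pl '' closure (S : Set X) ⊆ closure (Pl '' (S : Set X)) :=
      image_closure_subset_closure_image hPlcont
    have h3 : Pl '' (S : Set X) ⊆ (Submodule.span ℝ (Set.range φt) : Set X) := by
      rintro _ ⟨x, hx, rfl⟩
      exact hmap ⟨x, hx, rfl⟩
    exact closure_mono h3 (h2 hu')
end

section
/- Let H be a real Hilbert space, let Γ : H → ℝ^s be a continuous linear map, let Ů := ker Γ, and let (φ_i)_{i≥1} be a complete system in H. Set Ů^(N) := span{φ₁,…,φ_N} ∩ Ů. Let J : H → ℝ be convex and continuous, and assume J grows at infinity on Ů. Then J attains its infimum on Ů and on each Ů^(N), and for any choice of minimizers u^(N) of J on Ů^(N): (a) J(u^(N)) converges as N → ∞ to the infimum of J over Ů, and (b) there exist a subsequence (u^(N_k)) and a minimizer ū of J on Ů such that u^(N_k) converges weakly to ū, i.e. ⟨u^(N_k), v⟩ → ⟨ū, v⟩ for every v ∈ H. -/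
/-!
Closed convex sets are weakly closed, so a convex lower semicontinuous functional is weakly
sequentially lower semicontinuous; together with sequential Banach–Alaoglu (the complete system
makes `H` separable) and growth at infinity, this yields minimizers on `Ů` and on every `Ů⁽ᴺ⁾`.
Since `Γ` has finite-dimensional range, the span of the `φ i` meets `Ů` in a dense subspace of
`Ů`, so continuity of `J` at a minimizer `ū` gives `J (u⁽ᴺ⁾) → J ū`. The trial solutions are
bounded, and a weak limit of a subsequence lies in `Ů` with value at most `J ū`.
-/

open Filter Topology Set InnerProductSpace

def GrowsAtInfinityOn {E : Type*} [Norm E] (J : E → ℝ) (S : Set E) : Prop :=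
  ∀ M : ℝ, ∃ R > (0 : ℝ), ∀ u ∈ S, R ≤ ‖u‖ → M ≤ J u

namespace GrowsAtInfinityOn

variable {E : Type*} [Norm E] {J : E → ℝ} {S : Set E}

theorem mono (hJ : GrowsAtInfinityOn J S) {T : Set E} (hTS : T ⊆ S) : GrowsAtInfinityOn J T :=
  fun M => (hJ M).imp fun _ ⟨hR, h⟩ => ⟨hR, fun u hu => h u (hTS hu)⟩

theorem exists_norm_le (hJ : GrowsAtInfinityOn J S) (c : ℝ) :
    ∃ R, ∀ u ∈ S, J u ≤ c → ‖u‖ ≤ R := by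
  obtain ⟨R, -, hR⟩ := hJ (c + 1)
  exact ⟨R, fun u hu hJu => le_of_not_ge fun h => by linarith [hR u hu h]⟩

end GrowsAtInfinityOn

theorem Submodule.exists_mem_span_image_Icc {R M : Type*} [Semiring R] [AddCommMonoid M]
    [Module R M] {φ : ℕ → M} {x : M} (hx : x ∈ span R (φ '' {i | 1 ≤ i})) :
    ∃ N, x ∈ span R (φ '' Icc 1 N) := by
  have hIci : {i | 1 ≤ i} = ⋃ N, Icc 1 N := by
    ext i
    simp
  rwa [hIci, image_iUnion, span_iUnion, mem_iSup_of_directed] at hx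
  exact Monotone.directed_le fun m n h => span_mono (image_mono (Icc_subset_Icc_right h))

theorem Submodule.ker_subset_closure_inf_ker {𝕜 E F : Type*} [NontriviallyNormedField 𝕜]
    [CompleteSpace 𝕜] [NormedAddCommGroup E] [NormedSpace 𝕜 E] [NormedAddCommGroup F]
    [NormedSpace 𝕜 F] [FiniteDimensional 𝕜 F] (Γ : E →L[𝕜] F) {D : Submodule 𝕜 E}
    (hD : Dense (D : Set E)) :
    (LinearMap.ker (Γ : E →ₗ[𝕜] F) : Set E) ⊆
      closure (D ⊓ LinearMap.ker (Γ : E →ₗ[𝕜] F) : Submodule 𝕜 E) := by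
  set T := D.map (Γ : E →ₗ[𝕜] F)
  have hΓT : ∀ v, Γ v ∈ T := by
    have hcl : closure (Γ '' D) ⊆ T :=
      T.closed_of_finiteDimensional.closure_subset_iff.2 fun _ ⟨d, hd, hdv⟩ => ⟨d, hd, hdv⟩
    exact fun v => hcl (image_closure_subset_closure_image Γ.continuous
      ⟨v, hD.closure_eq ▸ mem_univ v, rfl⟩)
  obtain ⟨σ, hσ⟩ := (((Γ : E →ₗ[𝕜] F).domRestrict D).codRestrict T
    fun d => ⟨d, d.2, rfl⟩).exists_rightInverse_of_surjective
    (LinearMap.range_eq_top.2 fun ⟨_, d, hd, hdt⟩ => ⟨⟨d, hd⟩, Subtype.ext hdt⟩)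
  have hΓσ : ∀ t : T, Γ (σ t) = t := fun t => congrArg Subtype.val (LinearMap.congr_fun hσ t)
  -- `P` is a continuous projection onto `ker Γ` along a finite-dimensional subspace of `D`.
  set P : E →L[𝕜] E := ContinuousLinearMap.id 𝕜 E -
    (D.subtype ∘ₗ σ).toContinuousLinearMap ∘L Γ.codRestrict T hΓT
  have hPD : ∀ d ∈ D, P d ∈ D ⊓ LinearMap.ker (Γ : E →ₗ[𝕜] F) := fun d hd =>
    ⟨D.sub_mem hd (σ _).2, by simp [P, hΓσ]⟩
  have hPker : ∀ u ∈ LinearMap.ker (Γ : E →ₗ[𝕜] F), P u = u := fun u hu => by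
    have : Γ.codRestrict T hΓT u = 0 := Subtype.ext hu
    simp [P, this]
  intro u hu
  rw [← hPker u hu]
  refine closure_mono ?_ (image_closure_subset_closure_image P.continuous
    ⟨u, hD.closure_eq ▸ mem_univ u, rfl⟩)
  rintro _ ⟨d, hd, rfl⟩
  exact hPD d hd

theorem Submodule.ker_subset_closure_iUnion_span_image_Icc_inf_ker {𝕜 E F : Type*}
    [NontriviallyNormedField 𝕜] [CompleteSpace 𝕜] [NormedAddCommGroup E] [NormedSpace 𝕜 E]
    [NormedAddCommGroup F] [NormedSpace 𝕜 F] [FiniteDimensional 𝕜 F] (Γ : E →L[𝕜] F)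
    {φ : ℕ → E} (hφ : Dense (span 𝕜 (φ '' {i | 1 ≤ i}) : Set E)) :
    (LinearMap.ker (Γ : E →ₗ[𝕜] F) : Set E) ⊆
      closure (⋃ N, (span 𝕜 (φ '' Icc 1 N) ⊓ LinearMap.ker (Γ : E →ₗ[𝕜] F) : Submodule 𝕜 E)) := by
  refine (ker_subset_closure_inf_ker Γ hφ).trans (closure_mono ?_)
  rintro x ⟨hxφ, hxΓ⟩
  obtain ⟨N, hxN⟩ := exists_mem_span_image_Icc hxφ
  exact mem_iUnion.2 ⟨N, hxN, hxΓ⟩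

theorem Submodule.isClosed_span_inf {𝕜 E : Type*} [NontriviallyNormedField 𝕜] [CompleteSpace 𝕜]
    [NormedAddCommGroup E] [NormedSpace 𝕜 E] {s : Set E} (hs : s.Finite) (U : Submodule 𝕜 E) :
    IsClosed ((span 𝕜 s ⊓ U : Submodule 𝕜 E) : Set E) :=
  have := FiniteDimensional.span_of_finite 𝕜 hs
  have : FiniteDimensional 𝕜 (span 𝕜 s ⊓ U : Submodule 𝕜 E) :=
    finiteDimensional_of_le inf_le_left
  closed_of_finiteDimensional _

theorem tendsto_of_isMinOn_of_mem_closure_iUnion {X : Type*} [TopologicalSpace X] {J : X → ℝ}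
    {V : ℕ → Set X} (hV : Monotone V) {ub : X} (hJ : ContinuousAt J ub)
    (hub : ub ∈ closure (⋃ N, V N)) {x : ℕ → X} (hx : ∀ N, IsMinOn J (V N) (x N))
    (hub_le : ∀ N, J ub ≤ J (x N)) :
    Tendsto (fun N => J (x N)) atTop (𝓝 (J ub)) := by
  refine tendsto_order.2 ⟨fun a ha => .of_forall fun N => ha.trans_le (hub_le N), fun b hb => ?_⟩
  obtain ⟨w, hwb, hwV⟩ := mem_closure_iff_nhds.1 hub _ (hJ.eventually (gt_mem_nhds hb))
  obtain ⟨N₀, hwN₀⟩ := mem_iUnion.1 hwV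
  filter_upwards [eventually_ge_atTop N₀] with N hN
  exact (isMinOn_iff.1 (hx N) w (hV hN hwN₀)).trans_lt hwb

section WeakLimits

variable {H : Type*} [NormedAddCommGroup H] [InnerProductSpace ℝ H] [CompleteSpace H]

theorem exists_subseq_tendsto_inner [TopologicalSpace.SeparableSpace H] {x : ℕ → H} {R : ℝ}
    (hx : ∀ n, ‖x n‖ ≤ R) :
    ∃ ψ : ℕ → ℕ, StrictMono ψ ∧ ∃ z : H,
      ∀ v, Tendsto (fun k => ⟪x (ψ k), v⟫_ℝ) atTop (𝓝 ⟪z, v⟫_ℝ) := by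
  have hball : ∀ n, StrongDual.toWeakDual (toDual ℝ H (x n)) ∈
      WeakDual.toStrongDual ⁻¹' Metric.closedBall 0 R := by
    simpa using hx
  obtain ⟨ℓ, -, ψ, hψ, hlim⟩ := WeakDual.isSeqCompact_closedBall ℝ H 0 R hball
  refine ⟨ψ, hψ, (toDual ℝ H).symm (WeakDual.toStrongDual ℓ), fun v => ?_⟩
  rw [toDual_symm_apply]
  exact ((WeakDual.eval_continuous v).tendsto ℓ).comp hlim

theorem Convex.mem_of_tendsto_inner {K : Set H} (hK : Convex ℝ K) (hKc : IsClosed K)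
    {ι : Type*} {l : Filter ι} [l.NeBot] {x : ι → H} {z : H} (hxK : ∀ᶠ i in l, x i ∈ K)
    (hz : ∀ v, Tendsto (fun i => ⟪x i, v⟫_ℝ) l (𝓝 ⟪z, v⟫_ℝ)) : z ∈ K := by
  have hweak : IsClosed (toWeakSpace ℝ H '' K) := by
    rw [← closure_eq_iff_isClosed, ← hK.toWeakSpace_closure ℝ, hKc.closure_eq]
  have hlim : Tendsto (fun i => toWeakSpace ℝ H (x i)) l (𝓝 (toWeakSpace ℝ H z)) := by
    have hind : IsInducing fun (y : WeakSpace ℝ H) (f : StrongDual ℝ H) => f y := ⟨rfl⟩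
    refine hind.tendsto_nhds_iff.2 (tendsto_pi_nhds.2 fun f => ?_)
    have h := hz ((toDual ℝ H).symm f)
    simp only [real_inner_comm ((toDual ℝ H).symm f), toDual_symm_apply] at h
    exact h
  obtain ⟨y, hy, hyz⟩ := hweak.mem_of_tendsto hlim (hxK.mono fun i hi => ⟨x i, hi, rfl⟩)
  rwa [(toWeakSpace ℝ H).injective hyz] at hy

variable {J : H → ℝ}

theorem ConvexOn.le_of_tendsto_inner (hJ : ConvexOn ℝ univ J) (hJc : LowerSemicontinuous J)
    {ι : Type*} {l : Filter ι} [l.NeBot] {x : ι → H} {z : H} {c : ℝ}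
    (hxJ : ∀ᶠ i in l, J (x i) ≤ c) (hz : ∀ v, Tendsto (fun i => ⟪x i, v⟫_ℝ) l (𝓝 ⟪z, v⟫_ℝ)) :
    J z ≤ c := by
  have hconv : Convex ℝ {u | J u ≤ c} := by simpa using hJ.convex_le c
  exact hconv.mem_of_tendsto_inner (hJc.isClosed_preimage c) hxJ hz

theorem ConvexOn.le_of_tendsto_of_tendsto_inner (hJ : ConvexOn ℝ univ J)
    (hJc : LowerSemicontinuous J) {ι : Type*} {l : Filter ι} [l.NeBot] {x : ι → H} {z : H}
    {c : ℝ} (hxJ : Tendsto (fun i => J (x i)) l (𝓝 c))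
    (hz : ∀ v, Tendsto (fun i => ⟪x i, v⟫_ℝ) l (𝓝 ⟪z, v⟫_ℝ)) : J z ≤ c :=
  le_of_forall_pos_le_add fun _ hε =>
    hJ.le_of_tendsto_inner hJc (hxJ.eventually (eventually_le_nhds (lt_add_of_pos_right c hε))) hz

variable [TopologicalSpace.SeparableSpace H] {K : Set H}

theorem exists_mem_forall_le_of_antitone (hK : Convex ℝ K) (hKc : IsClosed K)
    (hJ : ConvexOn ℝ univ J) (hJc : LowerSemicontinuous J) (hgrow : GrowsAtInfinityOn J K)
    {c : ℕ → ℝ} (hc : Antitone c) (hsublevel : ∀ n, ∃ u ∈ K, J u ≤ c n) :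
    ∃ z ∈ K, ∀ n, J z ≤ c n := by
  choose x hxK hxJ using hsublevel
  obtain ⟨R, hR⟩ := hgrow.exists_norm_le (c 0)
  obtain ⟨ψ, hψ, z, hz⟩ :=
    exists_subseq_tendsto_inner fun n => hR _ (hxK n) ((hxJ n).trans (hc (Nat.zero_le n)))
  refine ⟨z, hK.mem_of_tendsto_inner hKc (.of_forall fun k => hxK _) hz, fun n => ?_⟩
  refine hJ.le_of_tendsto_inner hJc ?_ hz
  filter_upwards [eventually_ge_atTop n] with k hk
  exact (hxJ _).trans (hc (hk.trans (hψ.id_le k)))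

theorem exists_isMinOn_of_growsAtInfinityOn (hne : K.Nonempty) (hK : Convex ℝ K)
    (hKc : IsClosed K) (hJ : ConvexOn ℝ univ J) (hJc : LowerSemicontinuous J)
    (hgrow : GrowsAtInfinityOn J K) : ∃ w ∈ K, IsMinOn J K w := by
  have hbdd : BddBelow (J '' K) := by
    by_contra hunbdd
    obtain ⟨z, -, hz⟩ := exists_mem_forall_le_of_antitone (c := fun n : ℕ => -(n : ℝ)) hK hKc hJ
      hJc hgrow (fun m n h => neg_le_neg (Nat.cast_le.2 h)) fun n => by
        obtain ⟨_, ⟨u, hu, rfl⟩, hlt⟩ := not_bddBelow_iff.1 hunbdd (-(n : ℝ))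
        exact ⟨u, hu, hlt.le⟩
    obtain ⟨n, hn⟩ := exists_nat_gt (-J z)
    linarith [hz n]
  set m := sInf (J '' K)
  obtain ⟨w, hwK, hw⟩ := exists_mem_forall_le_of_antitone (c := fun n : ℕ => m + 1 / (n + 1)) hK
    hKc hJ hJc hgrow (fun i j h => by dsimp only; gcongr) fun n => by
      obtain ⟨_, ⟨u, hu, rfl⟩, hlt⟩ := Real.lt_sInf_add_pos (hne.image J) Nat.one_div_pos_of_nat
      exact ⟨u, hu, hlt.le⟩
  have hwm : J w ≤ m := by
    simpa using ge_of_tendsto (tendsto_one_div_add_atTop_nhds_zero_nat.const_add m) (.of_forall hw)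
  exact ⟨w, hwK, isMinOn_iff.2 fun u hu => hwm.trans (csInf_le hbdd (mem_image_of_mem J hu))⟩

end WeakLimits

/-- Convergence part of Theorem 1 of the paper: for a convex continuous functional
`J` growing at infinity on `Ů = ker Γ`, the Ritz–Lagrange trial solutions
`u⁽ᴺ⁾` (minimizers of `J` on `span{φ₁,…,φ_N} ∩ Ů`) exist; their `J`-values converge
to the infimum of `J` on `Ů`, and a subsequence converges weakly to a minimizer. -/
theorem stmt3 {H : Type*} [NormedAddCommGroup H] [InnerProductSpace ℝ H]
    [CompleteSpace H]
    (s : ℕ) (Γ : H →L[ℝ] EuclideanSpace ℝ (Fin s))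
    (φ : ℕ → H)
    (hcomplete : Dense (Submodule.span ℝ (φ '' {i | 1 ≤ i}) : Set H))
    (J : H → ℝ) (hconv : ConvexOn ℝ Set.univ J) (hcont : Continuous J)
    (U : Submodule ℝ H) (hUdef : U = LinearMap.ker (Γ : H →ₗ[ℝ] EuclideanSpace ℝ (Fin s)))
    (UN : ℕ → Submodule ℝ H)
    (hUN : ∀ N, UN N = Submodule.span ℝ (φ '' Set.Icc 1 N) ⊓ U)
    (hgrow : ∀ M : ℝ, ∃ R > (0:ℝ), ∀ u ∈ U, R ≤ ‖u‖ → M ≤ J u) :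
    (∃ ub ∈ U, ∀ u ∈ U, J ub ≤ J u) ∧
    (∀ N, ∃ w ∈ UN N, ∀ u ∈ UN N, J w ≤ J u) ∧
    (∀ uN : ℕ → H, (∀ N, uN N ∈ UN N ∧ ∀ u ∈ UN N, J (uN N) ≤ J u) →
      Tendsto (fun N => J (uN N)) atTop (𝓝 (⨅ u : U, J u)) ∧
      ∃ ψ : ℕ → ℕ, StrictMono ψ ∧ ∃ ub ∈ U, (∀ u ∈ U, J ub ≤ J u) ∧
        ∀ v : H, Tendsto (fun k => (inner ℝ (uN (ψ k)) v : ℝ)) atTop (𝓝 (inner ℝ ub v : ℝ))) := by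
  have : TopologicalSpace.SeparableSpace H := hcomplete.isSeparable_iff.1
    ((countable_range φ).mono (image_subset_range _ _)).isSeparable.span
  have hgrowU : GrowsAtInfinityOn J U := hgrow
  have hUc : IsClosed (U : Set H) := hUdef ▸ Γ.isClosed_ker
  have hUN_le : ∀ N, UN N ≤ U := fun N => hUN N ▸ inf_le_right
  have hUNc : ∀ N, IsClosed (UN N : Set H) := fun N =>
    hUN N ▸ Submodule.isClosed_span_inf ((finite_Icc 1 N).image φ) U
  obtain ⟨ub, hubU, hub⟩ := exists_isMinOn_of_growsAtInfinityOn ⟨0, U.zero_mem⟩ U.convex hUc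
    hconv hcont.lowerSemicontinuous hgrowU
  refine ⟨⟨ub, hubU, hub⟩, fun N => exists_isMinOn_of_growsAtInfinityOn ⟨0, (UN N).zero_mem⟩
    (UN N).convex (hUNc N) hconv hcont.lowerSemicontinuous (hgrowU.mono (hUN_le N)),
    fun uN huN => ?_⟩
  have hlim : Tendsto (fun N => J (uN N)) atTop (𝓝 (J ub)) := by
    refine tendsto_of_isMinOn_of_mem_closure_iUnion (V := fun N => (UN N : Set H)) ?_
      hcont.continuousAt ?_ (fun N => (huN N).2) fun N => hub (hUN_le N (huN N).1)
    · intro m n h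
      simp only [hUN, Submodule.coe_inf]
      exact inter_subset_inter_left _ (Submodule.span_mono (image_mono (Icc_subset_Icc_right h)))
    · simpa only [hUN, hUdef] using
        Submodule.ker_subset_closure_iUnion_span_image_Icc_inf_ker Γ hcomplete (hUdef ▸ hubU)
  refine ⟨hub.iInf_eq hubU ▸ hlim, ?_⟩
  obtain ⟨R, hR⟩ := hgrowU.exists_norm_le (J 0)
  obtain ⟨ψ, hψ, z, hz⟩ := exists_subseq_tendsto_inner fun N =>
    hR _ (hUN_le N (huN N).1) ((huN N).2 0 (UN N).zero_mem)
  have hzU : z ∈ U := U.convex.mem_of_tendsto_inner hUc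
    (.of_forall fun k => hUN_le _ (huN (ψ k)).1) hz
  have hJz : J z ≤ J ub := hconv.le_of_tendsto_of_tendsto_inner hcont.lowerSemicontinuous
    (hlim.comp hψ.tendsto_atTop) hz
  exact ⟨ψ, hψ, z, hzU, fun u hu => hJz.trans (hub hu), hz⟩
end

section
/- For every N ∈ ℕ and all real coefficients a₀, a₁, …, a_N: ∫₀^π ( Σ_{n=1}^N n²·a_n·cos(n·x) + 2 )² dx ≥ 4π. Consequently there is no sequence of finite cosine combinations u_k(x) = Σ_{n=0}^{N_k} a_{k,n}·cos(n·x) such that simultaneously ∫₀^π (u_k(x) − x²)² dx → 0 and ∫₀^π (u_k''(x) − 2)² dx → 0; in particular the system cos(nx), n ≥ 0, is not complete in W₂²([0,π]). -/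
/-!
Every cosine `cos (n x)` with `n ≥ 1` has mean zero on `[0, π]`, so a combination `g` of
them is orthogonal to constants and `∫₀^π (g + 2)² = ∫₀^π g² + 4π ≥ 4π`. The second
derivatives of cosine combinations are such `g`'s with the opposite sign, so they stay at
`L²`-distance at least `√(4π)` from `(x²)'' = 2`.
-/

open Finset Real Filter Topology

theorem integral_cos_nat_mul_eq_zero {n : ℕ} (hn : n ≠ 0) :
    ∫ x in (0:ℝ)..π, cos (n * x) = 0 := by
  have hn' : (n : ℝ) ≠ 0 := Nat.cast_ne_zero.mpr hn
  rw [intervalIntegral.integral_comp_mul_left (fun x => cos x) hn', integral_cos]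
  simp [sin_nat_mul_pi]

theorem integral_sum_cos_nat_mul_eq_zero {s : Finset ℕ} (hs : 0 ∉ s) (c : ℕ → ℝ) :
    ∫ x in (0:ℝ)..π, ∑ n ∈ s, c n * cos (n * x) = 0 := by
  rw [intervalIntegral.integral_finsetSum fun n _ => (by fun_prop : Continuous
    fun x : ℝ => c n * cos (n * x)).intervalIntegrable _ _]
  refine sum_eq_zero fun n hn => ?_
  rw [intervalIntegral.integral_const_mul,
    integral_cos_nat_mul_eq_zero (ne_of_mem_of_not_mem hn hs), mul_zero]

theorem integral_add_const_sq_of_integral_eq_zero {g : ℝ → ℝ} {a b : ℝ}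
    (hg : IntervalIntegrable g MeasureTheory.volume a b)
    (hg2 : IntervalIntegrable (fun x => g x ^ 2) MeasureTheory.volume a b)
    (h0 : ∫ x in a..b, g x = 0) (c : ℝ) :
    ∫ x in a..b, (g x + c) ^ 2 = (∫ x in a..b, g x ^ 2) + c ^ 2 * (b - a) := by
  have hlin : IntervalIntegrable (fun x => 2 * c * g x) MeasureTheory.volume a b :=
    hg.const_mul _
  calc ∫ x in a..b, (g x + c) ^ 2
      = ∫ x in a..b, (g x ^ 2 + 2 * c * g x) + c ^ 2 := by congr 1; ext x; ring
    _ = (∫ x in a..b, g x ^ 2) + 2 * c * (∫ x in a..b, g x) + c ^ 2 * (b - a) := by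
      rw [intervalIntegral.integral_add (hg2.add hlin) intervalIntegrable_const,
        intervalIntegral.integral_add hg2 hlin, intervalIntegral.integral_const_mul,
        intervalIntegral.integral_const, smul_eq_mul, mul_comm (b - a)]
    _ = (∫ x in a..b, g x ^ 2) + c ^ 2 * (b - a) := by rw [h0, mul_zero, add_zero]

theorem four_pi_le_integral_sum_cos_add_two_sq (N : ℕ) (a : ℕ → ℝ) :
    4 * π ≤ ∫ x in (0:ℝ)..π, (∑ n ∈ Icc 1 N, (n : ℝ) ^ 2 * a n * cos (n * x) + 2) ^ 2 := by
  have hcont : Continuous fun x : ℝ => ∑ n ∈ Icc 1 N, (n : ℝ) ^ 2 * a n * cos (n * x) := by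
    fun_prop
  rw [integral_add_const_sq_of_integral_eq_zero (hcont.intervalIntegrable _ _)
    ((hcont.pow 2).intervalIntegrable _ _)
    (integral_sum_cos_nat_mul_eq_zero (by simp) fun n => (n : ℝ) ^ 2 * a n)]
  have hsq : 0 ≤ ∫ x in (0:ℝ)..π, (∑ n ∈ Icc 1 N, (n : ℝ) ^ 2 * a n * cos (n * x)) ^ 2 :=
    intervalIntegral.integral_nonneg pi_pos.le fun x _ => sq_nonneg _
  linarith

/-- Incompleteness of the cosines in `W₂²([0,π])` (Section 4 of the paper):
the second derivatives of cosine combinations stay at `L²`-distance at least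
`√(4π)` from the constant `2 = (x²)''`; hence no sequence of cosine combinations
approximates `x²` together with its second derivative in `L²(0,π)`. -/
theorem stmt8 :
    (∀ (N : ℕ) (a : ℕ → ℝ),
      4 * π ≤ ∫ x in (0:ℝ)..π, (∑ n ∈ Icc 1 N, (n : ℝ) ^ 2 * a n * cos (n * x) + 2) ^ 2) ∧
    ¬ ∃ (Nk : ℕ → ℕ) (a : ℕ → ℕ → ℝ),
      Tendsto (fun k => ∫ x in (0:ℝ)..π,
          ((∑ n ∈ range (Nk k + 1), a k n * cos (n * x)) - x ^ 2) ^ 2) atTop (𝓝 0) ∧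
      Tendsto (fun k => ∫ x in (0:ℝ)..π,
          ((-∑ n ∈ Icc 1 (Nk k), (n : ℝ) ^ 2 * a k n * cos (n * x)) - 2) ^ 2) atTop (𝓝 0) := by
  refine ⟨four_pi_le_integral_sum_cos_add_two_sq, ?_⟩
  rintro ⟨Nk, a, -, hsecond⟩
  have hbound : (4 : ℝ) * π ≤ 0 := by
    refine ge_of_tendsto' hsecond fun k => ?_
    simp_rw [← neg_add', neg_sq]
    exact four_pi_le_integral_sum_cos_add_two_sq (Nk k) (a k)
  linarith [pi_pos]
end

section
/- Let f : ℝ → ℝ and suppose there exist f₁ : ℝ → ℝ and a measurable g : ℝ → ℝ with ∫₀^π g(t)² dt < ∞ such that f₁(t) = f₁(0) + ∫₀^t g(s) ds and f(x) = f(0) + ∫₀^x f₁(t) dt for all x, t ∈ [0,π]. Then for every ε > 0 there exist N ∈ ℕ and real coefficients b₁, b₂, a₀, a₁, …, a_N such that ∫₀^π ( f(x) − (b₁·x + b₂·x² + Σ_{n=0}^N a_n·cos(n·x)) )² dx + ∫₀^π ( f₁(x) − (b₁ + 2·b₂·x − Σ_{n=1}^N n·a_n·sin(n·x)) )² dx +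 ∫₀^π ( g(x) − (2·b₂ − Σ_{n=1}^N n²·a_n·cos(n·x)) )² dx < ε. -/
/-!
Approximate `g` in `L²(0, π)` by a cosine polynomial `h`: continuous functions are dense in
`L²`, and a continuous `φ` on `[0, π]` is uniformly close to `p (cos x)` for a polynomial `p`
close to `φ ∘ arccos` on `[-1, 1]` (Weierstrass); product-to-sum formulas turn `p (cos x)` into a
cosine polynomial. Integrating `h` twice with the initial values `f₁ 0` and `f 0` gives a
combination of `x`, `x²` and `cos (n x)`. The errors in `f₁` and `f` are then the first and
second primitives of `g - h` vanishing at `0`, and by Cauchy–Schwarz the `L²` norm of such a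
primitive is at most `π` times that of the integrand. Hence the total error is at most
`(π⁴ + π² + 1) ∫ (g - h)²`.
-/

open Finset Real MeasureTheory Polynomial

lemma Finset.sum_range_succ_eq_add_sum_Icc {M : Type*} [AddCommMonoid M] (F : ℕ → M) (N : ℕ) :
    ∑ n ∈ range (N + 1), F n = F 0 + ∑ n ∈ Icc 1 N, F n := by
  rw [sum_range_eq_add_Ico _ (by omega : 0 < N + 1), Ico_add_one_right_eq_Icc]

lemma ContinuousOn.memLp_restrict_Ioc {u : ℝ → ℝ} {a b : ℝ} (hu : ContinuousOn u (Set.Icc a b))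
    (p : ENNReal) : MemLp u p (volume.restrict (Set.Ioc a b)) := by
  obtain ⟨C, hC⟩ := isCompact_Icc.exists_bound_of_continuousOn hu
  refine MemLp.of_bound
    ((hu.aestronglyMeasurable measurableSet_Icc).mono_set Set.Ioc_subset_Icc_self) C ?_
  exact (ae_restrict_iff' measurableSet_Ioc).2
    (ae_of_all _ fun x hx => hC x (Set.Ioc_subset_Icc_self hx))

lemma MeasureTheory.MemLp.intervalIntegrable_of_le {v : ℝ → ℝ} {a b : ℝ}
    (hv : MemLp v 2 (volume.restrict (Set.Ioc a b))) (hab : a ≤ b) :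
    IntervalIntegrable v volume a b :=
  (intervalIntegrable_iff_integrableOn_Ioc_of_le hab).2 (hv.integrable one_le_two)

def cosineSpan : Submodule ℝ (ℝ → ℝ) :=
  Submodule.span ℝ (Set.range fun (n : ℕ) (x : ℝ) => cos (n * x))

lemma cos_nat_mul_mem_cosineSpan (n : ℕ) : (fun x : ℝ => cos (n * x)) ∈ cosineSpan :=
  Submodule.subset_span ⟨n, rfl⟩

lemma mul_cos_mem_cosineSpan {h : ℝ → ℝ} (hh : h ∈ cosineSpan) :
    (fun x => h x * cos x) ∈ cosineSpan := by
  suffices cosineSpan ≤ cosineSpan.comap (LinearMap.mulRight ℝ cos) from this hh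
  refine Submodule.span_le.2 ?_
  rintro _ ⟨n, rfl⟩
  change (fun x => cos (n * x) * cos x) ∈ cosineSpan
  rcases n with _ | n
  · simpa using cos_nat_mul_mem_cosineSpan 1
  · have hprod : (fun x : ℝ => cos ((n + 1 : ℕ) * x) * cos x) =
        (2⁻¹ : ℝ) • (fun x : ℝ => cos ((n + 2 : ℕ) * x)) + (2⁻¹ : ℝ) • fun x => cos (n * x) := by
      ext x
      simp only [Pi.add_apply, Pi.smul_apply, smul_eq_mul]
      rw [← mul_add, cos_add_cos]
      push_cast
      ring_nf
    rw [hprod]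
    exact add_mem (Submodule.smul_mem _ _ (cos_nat_mul_mem_cosineSpan _))
      (Submodule.smul_mem _ _ (cos_nat_mul_mem_cosineSpan _))

lemma eval_cos_mem_cosineSpan (p : ℝ[X]) : (fun x => p.eval (cos x)) ∈ cosineSpan := by
  induction p using Polynomial.induction_on' with
  | add p q hp hq =>
    simp only [eval_add]
    exact add_mem hp hq
  | monomial k a =>
    have hpow : (fun x => cos x ^ k) ∈ cosineSpan := by
      induction k with
      | zero => simpa using cos_nat_mul_mem_cosineSpan 0
      | succ k ih => simpa only [pow_succ] using mul_cos_mem_cosineSpan ih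
    simp only [eval_monomial]
    exact cosineSpan.smul_mem a hpow

lemma exists_sum_cos_eq_of_mem_cosineSpan {h : ℝ → ℝ} (hh : h ∈ cosineSpan) :
    ∃ (N : ℕ) (c : ℕ → ℝ), ∀ x, h x = ∑ n ∈ range (N + 1), c n * cos (n * x) := by
  obtain ⟨c, rfl⟩ := Finsupp.mem_span_range_iff_exists_finsupp.1 hh
  refine ⟨c.support.sup id, c, fun x => ?_⟩
  rw [Finsupp.sum_of_support_subset c (fun n hn => mem_range_succ_iff.2 (le_sup (f := id) hn))
    (fun n a => a • fun x : ℝ => cos (n * x)) (fun _ _ => zero_smul _ _)]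
  simp

theorem exists_sum_cos_near_of_continuousOn {φ : ℝ → ℝ} (hφ : ContinuousOn φ (Set.Icc 0 π))
    {η : ℝ} (hη : 0 < η) :
    ∃ (N : ℕ) (c : ℕ → ℝ),
      ∀ x ∈ Set.Icc 0 π, |φ x - ∑ n ∈ range (N + 1), c n * cos (n * x)| < η := by
  let ψ : C(Set.Icc (-1 : ℝ) 1, ℝ) := ⟨fun y => φ (arccos y),
    hφ.comp_continuous (continuous_arccos.comp continuous_subtype_val)
      fun y => ⟨arccos_nonneg y, arccos_le_pi y⟩⟩
  obtain ⟨p, hp⟩ := exists_polynomial_near_continuousMap (-1) 1 ψ η hη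
  obtain ⟨N, c, hc⟩ := exists_sum_cos_eq_of_mem_cosineSpan (eval_cos_mem_cosineSpan p)
  refine ⟨N, c, fun x hx => ?_⟩
  have := (p.toContinuousMapOn _ - ψ).norm_coe_le_norm ⟨cos x, neg_one_le_cos x, cos_le_one x⟩
  rw [← hc x, abs_sub_comm]
  simpa [ψ, arccos_cos hx.1 hx.2] using this.trans_lt hp

theorem exists_sum_cos_integral_sq_sub_lt {g : ℝ → ℝ}
    (hg : MemLp g 2 (volume.restrict (Set.Ioc 0 π))) {δ : ℝ} (hδ : 0 < δ) :
    ∃ (N : ℕ) (c : ℕ → ℝ),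
      ∫ x in 0..π, (g x - ∑ n ∈ range (N + 1), c n * cos (n * x)) ^ 2 < δ := by
  set μ := volume.restrict (Set.Ioc 0 π)
  have two : ENNReal.ofReal 2 = 2 := by norm_num
  obtain ⟨φ, hgφ, hφ⟩ := (two ▸ hg).exists_boundedContinuous_integral_rpow_sub_le two_pos
    (div_pos hδ (by norm_num : (0:ℝ) < 8))
  rw [two] at hφ
  simp only [rpow_two, norm_eq_abs, sq_abs] at hgφ
  obtain ⟨N, c, hc⟩ := exists_sum_cos_near_of_continuousOn φ.continuous.continuousOn
    (sqrt_pos.2 (by positivity : 0 < δ / (8 * π)))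
  refine ⟨N, c, ?_⟩
  set q := fun x => ∑ n ∈ range (N + 1), c n * cos (n * x)
  have hgφi : Integrable (fun x => (g x - φ x) ^ 2) μ := (hg.sub hφ).integrable_sq
  have hφqi : Integrable (fun x => (φ x - q x) ^ 2) μ :=
    (hφ.sub (ContinuousOn.memLp_restrict_Ioc (by fun_prop) 2)).integrable_sq
  have hφq : ∫ x, (φ x - q x) ^ 2 ∂μ ≤ δ / 8 := by
    calc ∫ x, (φ x - q x) ^ 2 ∂μ ≤ ∫ _, δ / (8 * π) ∂μ := by
          refine integral_mono_of_nonneg (ae_of_all _ fun x => sq_nonneg _) (integrable_const _)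
            ((ae_restrict_iff' measurableSet_Ioc).2 (ae_of_all _ fun x hx => ?_))
          simpa using ((lt_sqrt (abs_nonneg _)).1 (hc x (Set.Ioc_subset_Icc_self hx))).le
      _ = δ / 8 := by
          simp [μ, pi_pos.le]
          field_simp
  calc ∫ x in 0..π, (g x - q x) ^ 2 = ∫ x, (g x - q x) ^ 2 ∂μ :=
        intervalIntegral.integral_of_le pi_pos.le
    _ ≤ ∫ x, (2 * (g x - φ x) ^ 2 + 2 * (φ x - q x) ^ 2) ∂μ := by
      refine integral_mono_of_nonneg (ae_of_all _ fun x => sq_nonneg _)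
        ((hgφi.const_mul 2).add (hφqi.const_mul 2)) (ae_of_all _ fun x => ?_)
      nlinarith [sq_nonneg (g x + q x - 2 * φ x)]
    _ = 2 * ∫ x, (g x - φ x) ^ 2 ∂μ + 2 * ∫ x, (φ x - q x) ^ 2 ∂μ := by
      rw [integral_add (hgφi.const_mul 2) (hφqi.const_mul 2), integral_const_mul,
        integral_const_mul]
    _ ≤ 2 * (δ / 8) + 2 * (δ / 8) := by gcongr
    _ < δ := by linarith

theorem intervalIntegral.sq_integral_le_mul_integral_sq {u : ℝ → ℝ} {a b : ℝ} (hab : a ≤ b)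
    (hu : IntervalIntegrable u volume a b)
    (hu2 : IntervalIntegrable (fun x => u x ^ 2) volume a b) :
    (∫ x in a..b, u x) ^ 2 ≤ (b - a) * ∫ x in a..b, u x ^ 2 := by
  set I := ∫ x in a..b, u x
  set J := ∫ x in a..b, u x ^ 2
  -- `m ↦ ∫ (u - m)²` is a nonnegative quadratic, so its discriminant is nonpositive
  have hquad : ∀ m : ℝ, 0 ≤ (b - a) * (m * m) + (-2 * I) * m + J := by
    intro m
    have hexp : ∫ x in a..b, (u x - m) ^ 2 = (b - a) * (m * m) + (-2 * I) * m + J := by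
      simp_rw [sub_sq']
      rw [integral_sub (hu2.add intervalIntegrable_const) (hu.const_mul _ |>.mul_const _),
        integral_add hu2 intervalIntegrable_const, integral_mul_const, integral_const_mul,
        integral_const, smul_eq_mul]
      ring
    exact hexp ▸ integral_nonneg hab fun x _ => sq_nonneg _
  have := discrim_le_zero hquad
  rw [discrim] at this
  linarith

/-- For integrable `v` this says that `u` is absolutely continuous on `[a, b]` with `u' = v`
almost everywhere. -/
def IsIndefiniteIntegralOn (u v : ℝ → ℝ) (a b : ℝ) : Prop :=
  ∀ x ∈ Set.Icc a b, u x = u a + ∫ t in a..x, v t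

namespace IsIndefiniteIntegralOn

variable {u v U V : ℝ → ℝ} {a b : ℝ}

lemma of_hasDerivAt (hd : ∀ x, HasDerivAt u (v x) x) (hv : Continuous v) :
    IsIndefiniteIntegralOn u v a b := fun x _ => by
  rw [intervalIntegral.integral_eq_sub_of_hasDerivAt (fun y _ => hd y) (hv.intervalIntegrable _ _)]
  ring

lemma continuousOn (h : IsIndefiniteIntegralOn u v a b) (hv : IntervalIntegrable v volume a b) :
    ContinuousOn u (Set.Icc a b) :=
  ((continuousOn_const.add (intervalIntegral.continuousOn_primitive_interval' hv
    Set.left_mem_uIcc)).mono Set.Icc_subset_uIcc).congr h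

lemma sub (hu : IsIndefiniteIntegralOn u v a b) (hU : IsIndefiniteIntegralOn U V a b)
    (hv : IntervalIntegrable v volume a b) (hV : IntervalIntegrable V volume a b) :
    IsIndefiniteIntegralOn (fun x => u x - U x) (fun x => v x - V x) a b := fun x hx => by
  have hsub : Set.uIcc a x ⊆ Set.uIcc a b :=
    Set.uIcc_subset_uIcc Set.left_mem_uIcc (Set.Icc_subset_uIcc hx)
  simp only
  rw [hu x hx, hU x hx, intervalIntegral.integral_sub (hv.mono_set hsub) (hV.mono_set hsub)]
  ring

lemma integral_sq_le (h : IsIndefiniteIntegralOn u v a b) (ha : u a = 0) (hab : a ≤ b)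
    (hv : MemLp v 2 (volume.restrict (Set.Ioc a b))) :
    ∫ x in a..b, u x ^ 2 ≤ (b - a) ^ 2 * ∫ x in a..b, v x ^ 2 := by
  have hvi := hv.intervalIntegrable_of_le hab
  have hv2 : IntervalIntegrable (fun x => v x ^ 2) volume a b :=
    (intervalIntegrable_iff_integrableOn_Ioc_of_le hab).2 hv.integrable_sq
  have hpt : ∀ x ∈ Set.Icc a b, u x ^ 2 ≤ (b - a) * ∫ t in a..b, v t ^ 2 := fun x hx => by
    have hsub : Set.uIcc a x ⊆ Set.uIcc a b :=
      Set.uIcc_subset_uIcc Set.left_mem_uIcc (Set.Icc_subset_uIcc hx)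
    calc u x ^ 2 = (∫ t in a..x, v t) ^ 2 := by rw [h x hx, ha, zero_add]
      _ ≤ (x - a) * ∫ t in a..x, v t ^ 2 := intervalIntegral.sq_integral_le_mul_integral_sq
          hx.1 (hvi.mono_set hsub) (hv2.mono_set hsub)
      _ ≤ (b - a) * ∫ t in a..b, v t ^ 2 := by
        gcongr ?_ * ?_
        · exact intervalIntegral.integral_nonneg hx.1 fun _ _ => sq_nonneg _
        · linarith [hx.2]
        · exact intervalIntegral.integral_mono_interval le_rfl hx.1 hx.2
            (ae_of_all _ fun _ => sq_nonneg _) hv2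
  calc ∫ x in a..b, u x ^ 2 ≤ ∫ _ in a..b, (b - a) * ∫ t in a..b, v t ^ 2 :=
        intervalIntegral.integral_mono_on hab
          (((h.continuousOn hvi).pow 2).intervalIntegrable_of_Icc hab) intervalIntegrable_const hpt
    _ = (b - a) ^ 2 * ∫ x in a..b, v x ^ 2 := by
        rw [intervalIntegral.integral_const, smul_eq_mul]
        ring

theorem integral_sq_add_le {u₀ u₁ u₂ : ℝ → ℝ} (h₁ : IsIndefiniteIntegralOn u₁ u₂ a b)
    (h₀ : IsIndefiniteIntegralOn u₀ u₁ a b) (h₁a : u₁ a = 0) (h₀a : u₀ a = 0) (hab : a ≤ b)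
    (hu₂ : MemLp u₂ 2 (volume.restrict (Set.Ioc a b))) :
    (∫ x in a..b, u₀ x ^ 2) + (∫ x in a..b, u₁ x ^ 2) + ∫ x in a..b, u₂ x ^ 2 ≤
      ((b - a) ^ 4 + (b - a) ^ 2 + 1) * ∫ x in a..b, u₂ x ^ 2 := by
  have hu₁ := (h₁.continuousOn (hu₂.intervalIntegrable_of_le hab)).memLp_restrict_Ioc 2
  have e₁ := h₁.integral_sq_le h₁a hab hu₂
  have e₀ := h₀.integral_sq_le h₀a hab hu₁
  nlinarith [mul_le_mul_of_nonneg_left e₁ (sq_nonneg (b - a))]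

end IsIndefiniteIntegralOn

section CosTrial

variable (N : ℕ) (b₁ b₂ : ℝ) (a : ℕ → ℝ)

noncomputable def cosTrial (x : ℝ) : ℝ :=
  b₁ * x + b₂ * x ^ 2 + ∑ n ∈ range (N + 1), a n * cos (n * x)

noncomputable def cosTrial' (x : ℝ) : ℝ :=
  b₁ + 2 * b₂ * x - ∑ n ∈ Icc 1 N, n * a n * sin (n * x)

noncomputable def cosTrial'' (x : ℝ) : ℝ :=
  2 * b₂ - ∑ n ∈ Icc 1 N, (n : ℝ) ^ 2 * a n * cos (n * x)

lemma hasDerivAt_cosTrial (x : ℝ) :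
    HasDerivAt (cosTrial N b₁ b₂ a) (cosTrial' N b₁ b₂ a x) x := by
  have hsum : HasDerivAt (fun x => ∑ n ∈ range (N + 1), a n * cos (n * x))
      (∑ n ∈ range (N + 1), -(n * a n * sin (n * x))) x :=
    HasDerivAt.fun_sum fun (n : ℕ) _ =>
      ((((hasDerivAt_id x).const_mul (n : ℝ)).cos).const_mul (a n)).congr_deriv (by simp; ring)
  refine ((((hasDerivAt_id' x).const_mul b₁).fun_add ((hasDerivAt_pow 2 x).const_mul b₂)).fun_add
    hsum).congr_deriv ?_
  simp [cosTrial', sum_range_succ_eq_add_sum_Icc, sub_eq_add_neg]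
  ring

lemma hasDerivAt_cosTrial' (x : ℝ) :
    HasDerivAt (cosTrial' N b₁ b₂ a) (cosTrial'' N b₂ a x) x := by
  have hsum : HasDerivAt (fun x => ∑ n ∈ Icc 1 N, n * a n * sin (n * x))
      (∑ n ∈ Icc 1 N, (n : ℝ) ^ 2 * a n * cos (n * x)) x :=
    HasDerivAt.fun_sum fun (n : ℕ) _ =>
      ((((hasDerivAt_id x).const_mul (n : ℝ)).sin).const_mul _).congr_deriv (by simp; ring)
  refine ((((hasDerivAt_id' x).const_mul (2 * b₂)).const_add b₁).fun_sub hsum).congr_deriv ?_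
  simp [cosTrial'']

lemma continuous_cosTrial' : Continuous (cosTrial' N b₁ b₂ a) := by
  unfold cosTrial'
  fun_prop

lemma continuous_cosTrial'' : Continuous (cosTrial'' N b₂ a) := by
  unfold cosTrial''
  fun_prop

end CosTrial

/-- `a n = -c n / n²` for `n ≥ 1` integrates `c n * cos (n x)` twice, and `a 0` fixes the value
at `0`. -/
theorem exists_cosTrial_eq (N : ℕ) (c : ℕ → ℝ) (y₀ y₁ : ℝ) :
    ∃ b₁ b₂ a, cosTrial N b₁ b₂ a 0 = y₀ ∧ cosTrial' N b₁ b₂ a 0 = y₁ ∧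
      ∀ x, cosTrial'' N b₂ a x = ∑ n ∈ range (N + 1), c n * cos (n * x) := by
  set a : ℕ → ℝ := fun n => -c n / n ^ 2
  have ha : ∀ n ∈ Icc 1 N, Function.update a 0 (y₀ - ∑ m ∈ Icc 1 N, a m) n = a n :=
    fun n hn => Function.update_of_ne (by grind) _ _
  refine ⟨y₁, c 0 / 2, Function.update a 0 (y₀ - ∑ m ∈ Icc 1 N, a m), ?_, ?_, fun x => ?_⟩
  · simp [cosTrial, sum_range_succ_eq_add_sum_Icc, sum_congr rfl ha]
  · simp [cosTrial']
  · rw [cosTrial'', sum_range_succ_eq_add_sum_Icc, sum_congr rfl fun n hn => by rw [ha n hn]]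
    have hn : ∀ n ∈ Icc 1 N, (n : ℝ) ^ 2 * a n * cos (n * x) = -(c n * cos (n * x)) :=
      fun n hn => by
        have : (n : ℝ) ≠ 0 := by exact_mod_cast (by grind : n ≠ 0)
        simp only [a]
        field_simp
    rw [sum_congr rfl hn, sum_neg_distrib]
    simp only [CharP.cast_eq_zero, zero_mul, cos_zero, mul_one]
    ring

/-- Completeness part of Lemma 3 of the paper: every `f ∈ W₂²([0,π])` (with first
weak derivative `f₁` and second weak derivative `g`) can be approximated in
`L²(0,π)`, simultaneously with its first and second derivatives, by combinations
of `x`, `x²` and cosines and their corresponding derivatives. -/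
theorem stmt9 (f f₁ g : ℝ → ℝ) (hgmeas : Measurable g)
    (hgL2 : IntegrableOn (fun t => g t ^ 2) (Set.Ioc 0 π))
    (hf₁ : ∀ t ∈ Set.Icc (0:ℝ) π, f₁ t = f₁ 0 + ∫ s in (0:ℝ)..t, g s)
    (hf : ∀ x ∈ Set.Icc (0:ℝ) π, f x = f 0 + ∫ t in (0:ℝ)..x, f₁ t) :
    ∀ ε > (0:ℝ), ∃ (N : ℕ) (b₁ b₂ : ℝ) (a : ℕ → ℝ),
      (∫ x in (0:ℝ)..π,
        (f x - (b₁ * x + b₂ * x ^ 2 + ∑ n ∈ range (N + 1), a n * cos (n * x))) ^ 2) +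
      (∫ x in (0:ℝ)..π,
        (f₁ x - (b₁ + 2 * b₂ * x - ∑ n ∈ Icc 1 N, n * a n * sin (n * x))) ^ 2) +
      (∫ x in (0:ℝ)..π,
        (g x - (2 * b₂ - ∑ n ∈ Icc 1 N, (n : ℝ) ^ 2 * a n * cos (n * x))) ^ 2) < ε := by
  intro ε hε
  have hg : MemLp g 2 (volume.restrict (Set.Ioc 0 π)) :=
    (memLp_two_iff_integrable_sq hgmeas.aestronglyMeasurable).2 hgL2
  have hC : 0 < π ^ 4 + π ^ 2 + 1 := by positivity
  obtain ⟨N, c, hc⟩ := exists_sum_cos_integral_sq_sub_lt hg (div_pos hε hC)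
  obtain ⟨b₁, b₂, a, h₀, h₁, h₂⟩ := exists_cosTrial_eq N c (f 0) (f₁ 0)
  refine ⟨N, b₁, b₂, a, ?_⟩
  have hgi := hg.intervalIntegrable_of_le pi_pos.le
  have hT' := continuous_cosTrial' N b₁ b₂ a
  have hT'' := continuous_cosTrial'' N b₂ a
  have hD₁ := IsIndefiniteIntegralOn.sub hf₁
    (.of_hasDerivAt (hasDerivAt_cosTrial' N b₁ b₂ a) hT'') hgi (hT''.intervalIntegrable _ _)
  have hD₀ := IsIndefiniteIntegralOn.sub hf (.of_hasDerivAt (hasDerivAt_cosTrial N b₁ b₂ a) hT')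
    ((IsIndefiniteIntegralOn.continuousOn hf₁ hgi).intervalIntegrable_of_Icc pi_pos.le)
    (hT'.intervalIntegrable _ _)
  have hbound := hD₁.integral_sq_add_le hD₀ (by simp [h₁]) (by simp [h₀]) pi_pos.le
    (hg.sub (hT''.continuousOn.memLp_restrict_Ioc 2))
  simp only [sub_zero] at hbound
  refine hbound.trans_lt ?_
  rw [← lt_div_iff₀' hC]
  simpa only [h₂] using hc
end

section
/- Let H and V be real Hilbert spaces, let Γ : H → V be a continuous linear map, let (ψ_j)_{j≥1} be a complete system in V, and set Ů_s := {u ∈ H | ⟨ψ_j, Γu⟩ = 0 for 1 ≤ j ≤ s} and Ů := ker Γ. Let J : H → ℝ be convex, continuous, and Gateaux differentiable with gradient J' : H → H, i.e. for all u, v ∈ H the limit of (J(u + t·v) − J(u))/t as t → 0 exists and equals ⟨J'(u), v⟩. Assume that for some s₀: (i) J grows at infinity on Ů_{s₀}, and (ii) there is a continuous nondecreasing function c : [0,∞) → [0,∞) with c(0) = 0 and c(t) > 0 for t > 0 such that ⟨J'(u) − J'(v), u − v⟩ ≥ c(‖u − v‖) for all u, v ∈ Ů_{s₀}. Then J has a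 unique minimizer ū on Ů and a unique minimizer ū_s on each Ů_s with s ≥ s₀, and ū_s → ū in the norm of H and J(ū_s) → J(ū) as s → ∞. -/
/-!
Uniform monotonicity of `J'` on a convex set makes `J` uniformly convex at midpoints there:
comparing `J'` at the quarter points `p, q` of `[x, y]` gives
`c (‖x - y‖ / 2) / 2 ≤ J x + J y - 2 J ((x + y) / 2)`.
Hence minimizing sequences are Cauchy, so `J` has a unique minimizer on every closed convex
subset of `Ů_{s₀}`, in particular on each `Ů_s`, `s ≥ s₀`; growth at infinity and the subgradient
inequality at `0` bound `J` below.
The minimal values `J ū_s` increase with `s` and are bounded by `J` on `⋂ Ů_s`. Since the midpoint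
of `ū_m` and `ū_n` (`m ≤ n`) lies in `Ů_m`, where `ū_m` is the minimizer, the same inequality makes
`(ū_s)` Cauchy. Its limit lies in every `Ů_s`, i.e. `Γ` of it is orthogonal to every `ψ_j`, hence
zero by completeness of `(ψ_j)`, and it minimizes `J` on `ker Γ`.
-/

open Filter Topology Set

theorem ConvexOn.le_sub_of_tendsto_slope_along {E : Type*} [AddCommGroup E] [Module ℝ E]
    {J : E → ℝ} (hconv : ConvexOn ℝ univ J) {u w : E} {d : ℝ}
    (hd : Tendsto (fun t : ℝ => (J (u + t • w) - J u) / t) (𝓝[≠] 0) (𝓝 d)) :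
    d ≤ J (u + w) - J u := by
  have hline : ConvexOn ℝ univ (fun t : ℝ => J (u + t • w)) := by
    have := (hconv.translate_right u).comp_linearMap (LinearMap.toSpanSingleton ℝ E w)
    rwa [preimage_univ, preimage_univ] at this
  have hslope : slope (fun t : ℝ => J (u + t • w)) 0 = fun t => (J (u + t • w) - J u) / t := by
    funext t
    simp [slope_def_field]
  have hderiv : HasDerivAt (fun t : ℝ => J (u + t • w)) d 0 :=
    hasDerivAt_iff_tendsto_slope.mpr (hslope ▸ hd)
  simpa [slope_def_field] using
    hline.le_slope_of_hasDerivAt (mem_univ 0) (mem_univ 1) one_pos hderiv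

theorem cauchySeq_of_modulus_le {X : Type*} [PseudoMetricSpace X] {φ : ℝ → ℝ}
    (hφ_mono : MonotoneOn φ (Ici 0)) (hφ_pos : ∀ t, 0 < t → 0 < φ t)
    {x : ℕ → X} {a b : ℕ → ℝ} {ℓ : ℝ} (ha : Tendsto a atTop (𝓝 ℓ)) (hb : Tendsto b atTop (𝓝 ℓ))
    (hgap : ∀ m n, m ≤ n → φ (dist (x m) (x n)) ≤ a m + a n - 2 * b m) :
    CauchySeq x := by
  refine Metric.cauchySeq_iff'.mpr fun ε hε => ?_
  have hδ : 0 < φ ε := hφ_pos ε hε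
  obtain ⟨N, hN⟩ := eventually_atTop.mp <|
    (ha.eventually (gt_mem_nhds (by linarith : ℓ < ℓ + φ ε / 4))).and
      (hb.eventually (lt_mem_nhds (by linarith : ℓ - φ ε / 4 < ℓ)))
  refine ⟨N, fun n hn => ?_⟩
  have hlt : φ (dist (x N) (x n)) < φ ε := by
    linarith [hgap N n hn, hN N le_rfl, hN n hn]
  rw [dist_comm]
  exact hφ_mono.reflect_lt dist_nonneg hε.le hlt

theorem bddBelow_image_of_affine_le_of_growth {H : Type*} [NormedAddCommGroup H]
    [InnerProductSpace ℝ H] {J : H → ℝ} {g : H} {a : ℝ} (haff : ∀ u, inner ℝ g u ≤ J u - a)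
    {S : Set H} (hgrow : ∀ M : ℝ, ∃ R > (0:ℝ), ∀ u ∈ S, R ≤ ‖u‖ → M ≤ J u) :
    BddBelow (J '' S) := by
  obtain ⟨R, hR0, hR⟩ := hgrow a
  refine ⟨a - ‖g‖ * R, ?_⟩
  rintro _ ⟨u, hu, rfl⟩
  rcases le_or_gt R ‖u‖ with hRu | huR
  · linarith [hR u hu hRu, mul_nonneg (norm_nonneg g) hR0.le]
  · have hinner : -(‖g‖ * ‖u‖) ≤ inner ℝ g u := neg_le_of_abs_le (abs_real_inner_le_norm g u)
    nlinarith [haff u, norm_nonneg g]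

section Minimizers

variable {H : Type*} [NormedAddCommGroup H] [InnerProductSpace ℝ H] {J : H → ℝ} {φ : ℝ → ℝ}

theorem ConvexOn.modulus_le_midpoint_defect (hconv : ConvexOn ℝ univ J) {J' : H → H}
    (hJ' : ∀ u v : H,
      Tendsto (fun t : ℝ => (J (u + t • v) - J u) / t) (𝓝[≠] 0) (𝓝 (inner ℝ (J' u) v)))
    {c : ℝ → ℝ} {S : Set H} (hS : Convex ℝ S)
    (hmonot : ∀ u ∈ S, ∀ v ∈ S, c ‖u - v‖ ≤ inner ℝ (J' u - J' v) (u - v))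
    {x y : H} (hx : x ∈ S) (hy : y ∈ S) :
    c (‖x - y‖ / 2) / 2 ≤ J x + J y - 2 * J (midpoint ℝ x y) := by
  set m := midpoint ℝ x y
  set p := midpoint ℝ x m
  set q := midpoint ℝ y m
  have hm : m ∈ S := hS.midpoint_mem hx hy
  have hp : p ∈ S := hS.midpoint_mem hx hm
  have hq : q ∈ S := hS.midpoint_mem hy hm
  have hsub_p := hconv.le_sub_of_tendsto_slope_along (hJ' p (x - p))
  have hsub_q := hconv.le_sub_of_tendsto_slope_along (hJ' q (y - q))
  rw [add_sub_cancel] at hsub_p hsub_q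
  have hqp : q - p = (-2 : ℝ) • (x - p) := by
    simp only [q, p, m, midpoint_eq_smul_add, invOf_eq_inv]; module
  have hqp' : q - p = (2 : ℝ) • (y - q) := by
    simp only [q, p, m, midpoint_eq_smul_add, invOf_eq_inv]; module
  have hnorm : ‖q - p‖ = ‖x - y‖ / 2 := by
    have : q - p = (2⁻¹ : ℝ) • (y - x) := by
      simp only [q, p, m, midpoint_eq_smul_add, invOf_eq_inv]; module
    rw [this, norm_smul, norm_sub_rev]
    norm_num
    ring
  have hmono := hmonot q hq p hp
  have hmid : J m ≤ (J p + J q) / 2 := by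
    have hpq : (2⁻¹ : ℝ) • p + (2⁻¹ : ℝ) • q = m := by
      simp only [q, p, m, midpoint_eq_smul_add, invOf_eq_inv]; module
    have := hconv.2 (mem_univ p) (mem_univ q)
      (by norm_num : (0 : ℝ) ≤ 2⁻¹) (by norm_num : (0 : ℝ) ≤ 2⁻¹) (by norm_num)
    rw [hpq, smul_eq_mul, smul_eq_mul] at this
    linarith
  have hsplit : inner ℝ (J' q - J' p) (q - p) =
      2 * inner ℝ (J' q) (y - q) + 2 * inner ℝ (J' p) (x - p) := by
    rw [inner_sub_left]
    nth_rw 1 [hqp']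
    rw [hqp, real_inner_smul_right, real_inner_smul_right]; ring
  rw [hnorm, hsplit] at hmono
  linarith

section ModulusOnSet

variable (hφ_pos : ∀ t, 0 < t → 0 < φ t) {S : Set H}
  (hgap : ∀ x ∈ S, ∀ y ∈ S, φ ‖x - y‖ ≤ J x + J y - 2 * J (midpoint ℝ x y))
include hφ_pos hgap

theorem eq_of_isMinOn_of_modulus_le (hS : Convex ℝ S) {x y : H} (hx : x ∈ S) (hy : y ∈ S)
    (hxmin : IsMinOn J S x) (hymin : IsMinOn J S y) : x = y := by
  by_contra hxy
  have hpos : 0 < φ ‖x - y‖ := hφ_pos _ (norm_pos_iff.mpr (sub_ne_zero.mpr hxy))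
  linarith [hgap x hx y hy, isMinOn_iff.mp hxmin _ (hS.midpoint_mem hx hy),
    isMinOn_iff.mp hymin x hx]

theorem exists_isMinOn_of_modulus_le [CompleteSpace H] (hcont : Continuous J)
    (hφ_mono : MonotoneOn φ (Ici 0)) (hSc : IsClosed S) (hS : Convex ℝ S) (hne : S.Nonempty)
    (hbdd : BddBelow (J '' S)) : ∃ x ∈ S, IsMinOn J S x := by
  obtain ⟨v, -, hv, hvS⟩ := exists_seq_tendsto_sInf (hne.image J) hbdd
  choose x hxS hxv using hvS
  set μ := sInf (J '' S)
  have hμ : ∀ u ∈ S, μ ≤ J u := fun u hu => csInf_le hbdd (mem_image_of_mem J hu)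
  have hJx : Tendsto (fun n => J (x n)) atTop (𝓝 μ) := by simpa only [hxv] using hv
  have hx : CauchySeq x := by
    refine cauchySeq_of_modulus_le hφ_mono hφ_pos hJx tendsto_const_nhds fun m n _ => ?_
    rw [dist_eq_norm]
    linarith [hgap _ (hxS m) _ (hxS n), hμ _ (hS.midpoint_mem (hxS m) (hxS n))]
  obtain ⟨xb, hlim⟩ := cauchySeq_tendsto_of_complete hx
  have hJxb : J xb = μ := tendsto_nhds_unique ((hcont.tendsto xb).comp hlim) hJx
  exact ⟨xb, hSc.mem_of_tendsto hlim (.of_forall hxS), fun u hu => hJxb ▸ hμ u hu⟩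

end ModulusOnSet

theorem exists_isMinOn_iInter_tendsto [CompleteSpace H] (hcont : Continuous J)
    (hφ_mono : MonotoneOn φ (Ici 0)) (hφ_pos : ∀ t, 0 < t → 0 < φ t) {S : ℕ → Set H}
    (hS : Antitone S) (hSconv : ∀ s, Convex ℝ (S s)) (hSc : ∀ s, IsClosed (S s))
    (hgap : ∀ x ∈ S 0, ∀ y ∈ S 0, φ ‖x - y‖ ≤ J x + J y - 2 * J (midpoint ℝ x y))
    (hne : (⋂ s, S s).Nonempty) {x : ℕ → H} (hxS : ∀ s, x s ∈ S s)
    (hxmin : ∀ s, IsMinOn J (S s) (x s)) :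
    ∃ xb ∈ ⋂ s, S s, IsMinOn J (⋂ s, S s) xb ∧ Tendsto x atTop (𝓝 xb) := by
  have hle : ∀ s, ∀ u ∈ ⋂ s, S s, J (x s) ≤ J u := fun s u hu =>
    isMinOn_iff.mp (hxmin s) u (mem_iInter.mp hu s)
  have hJx_mono : Monotone (fun s => J (x s)) := fun s t hst =>
    isMinOn_iff.mp (hxmin s) _ (hS hst (hxS t))
  obtain ⟨u₀, hu₀⟩ := hne
  have hJx := tendsto_atTop_ciSup hJx_mono ⟨J u₀, by rintro _ ⟨s, rfl⟩; exact hle s u₀ hu₀⟩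
  have hx : CauchySeq x := by
    refine cauchySeq_of_modulus_le hφ_mono hφ_pos hJx hJx fun m n hmn => ?_
    have hxn : x n ∈ S m := hS hmn (hxS n)
    rw [dist_eq_norm]
    linarith [hgap _ (hS (Nat.zero_le m) (hxS m)) _ (hS (Nat.zero_le n) (hxS n)),
      isMinOn_iff.mp (hxmin m) _ ((hSconv m).midpoint_mem (hxS m) hxn)]
  obtain ⟨xb, hlim⟩ := cauchySeq_tendsto_of_complete hx
  have hxb : xb ∈ ⋂ s, S s := mem_iInter.mpr fun s =>
    (hSc s).mem_of_tendsto hlim (eventually_atTop.mpr ⟨s, fun n hn => hS hn (hxS n)⟩)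
  have hJxb := tendsto_nhds_unique ((hcont.tendsto xb).comp hlim) hJx
  exact ⟨xb, hxb, fun u hu => hJxb ▸ ciSup_le fun s => hle s u hu, hlim⟩

end Minimizers

section RelaxedKernel

variable {H V : Type*} [NormedAddCommGroup H] [InnerProductSpace ℝ H]
  [NormedAddCommGroup V] [InnerProductSpace ℝ V] (Γ : H →L[ℝ] V) (ψ : ℕ → V)

def relaxedKernel (s : ℕ) : Submodule ℝ H where
  carrier := {u | ∀ j, 1 ≤ j → j ≤ s → inner ℝ (ψ j) (Γ u) = 0}
  add_mem' hu hv j hj hjs := by rw [map_add, inner_add_right, hu j hj hjs, hv j hj hjs, add_zero]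
  zero_mem' j _ _ := by rw [map_zero, inner_zero_right]
  smul_mem' a u hu j hj hjs := by rw [map_smul, inner_smul_right, hu j hj hjs, mul_zero]

theorem isClosed_relaxedKernel (s : ℕ) : IsClosed (relaxedKernel Γ ψ s : Set H) := by
  have : (relaxedKernel Γ ψ s : Set H) = ⋂ j ∈ Icc 1 s, {u | inner ℝ (ψ j) (Γ u) = 0} := by
    ext u
    simp [relaxedKernel, and_imp]
  rw [this]
  exact isClosed_biInter fun j _ =>
    isClosed_eq (continuous_const.inner Γ.continuous) continuous_const

theorem relaxedKernel_antitone : Antitone (relaxedKernel Γ ψ) :=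
  fun _ _ hst _ hu j hj hjt => hu j hj (hjt.trans hst)

theorem iInter_relaxedKernel_max (hψ : Dense (Submodule.span ℝ (ψ '' {j | 1 ≤ j}) : Set V))
    (s₀ : ℕ) : ⋂ s, (relaxedKernel Γ ψ (max s₀ s) : Set H) = {u | Γ u = 0} := by
  refine Subset.antisymm (fun u hu => ?_) (fun u hu => mem_iInter.mpr fun s j _ _ => ?_)
  · have hu' (j : ℕ) : u ∈ relaxedKernel Γ ψ j :=
      relaxedKernel_antitone Γ ψ (le_max_right s₀ j) (mem_iInter.mp hu j)
    have hspan : Submodule.span ℝ (ψ '' {j | 1 ≤ j}) ≤ (ℝ ∙ Γ u)ᗮ := by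
      rw [Submodule.span_le]
      rintro _ ⟨j, hj, rfl⟩
      exact Submodule.mem_orthogonal_singleton_iff_inner_left.mpr (hu' j j hj le_rfl)
    have hself : Γ u ∈ (ℝ ∙ Γ u)ᗮ :=
      hψ.induction (P := (· ∈ (ℝ ∙ Γ u)ᗮ)) (fun z hz => hspan hz)
        (Submodule.isClosed_orthogonal _) (Γ u)
    exact inner_self_eq_zero.mp (Submodule.mem_orthogonal_singleton_iff_inner_left.mp hself)
  · rw [show Γ u = 0 from hu, inner_zero_right]

end RelaxedKernel

theorem stmt10_general {H V : Type*}
    [NormedAddCommGroup H] [InnerProductSpace ℝ H] [CompleteSpace H]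
    [NormedAddCommGroup V] [InnerProductSpace ℝ V]
    (Γ : H →L[ℝ] V)
    (ψ : ℕ → V)
    (hcomplete : Dense (Submodule.span ℝ (ψ '' {j | 1 ≤ j}) : Set V))
    (Us : ℕ → Set H)
    (hUs : ∀ s, Us s = {u : H | ∀ j, 1 ≤ j → j ≤ s → (inner ℝ (ψ j) (Γ u) : ℝ) = 0})
    (U : Set H) (hU : U = {u : H | Γ u = 0})
    (J : H → ℝ) (hconv : ConvexOn ℝ Set.univ J) (hcont : Continuous J)
    (J' : H → H)
    (hJ' : ∀ u v : H,
      Tendsto (fun t : ℝ => (J (u + t • v) - J u) / t) (𝓝[≠] 0) (𝓝 (inner ℝ (J' u) v : ℝ)))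
    (s₀ : ℕ)
    (hgrow : ∀ M : ℝ, ∃ R > (0:ℝ), ∀ u ∈ Us s₀, R ≤ ‖u‖ → M ≤ J u)
    (c : ℝ → ℝ)
    (hc_mono : MonotoneOn c (Set.Ici 0))
    (hcpos : ∀ t : ℝ, 0 < t → 0 < c t)
    (hmonot : ∀ u ∈ Us s₀, ∀ v ∈ Us s₀, c ‖u - v‖ ≤ (inner ℝ (J' u - J' v) (u - v) : ℝ)) :
    ∃ ub : H, (ub ∈ U ∧ ∀ u ∈ U, J ub ≤ J u) ∧
      (∀ w, (w ∈ U ∧ ∀ u ∈ U, J w ≤ J u) → w = ub) ∧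
      ∃ ubs : ℕ → H,
        (∀ s, s₀ ≤ s →
          (ubs s ∈ Us s ∧ ∀ u ∈ Us s, J (ubs s) ≤ J u) ∧
          (∀ w, (w ∈ Us s ∧ ∀ u ∈ Us s, J w ≤ J u) → w = ubs s)) ∧
        Tendsto ubs atTop (𝓝 ub) ∧
        Tendsto (fun s => J (ubs s)) atTop (𝓝 (J ub)) := by
  obtain rfl : Us = fun s => (relaxedKernel Γ ψ s : Set H) := funext hUs
  set K := relaxedKernel Γ ψ
  have hK_anti : Antitone K := relaxedKernel_antitone Γ ψ
  have hU_eq : U = ⋂ s, (K (max s₀ s) : Set H) :=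
    hU.trans (iInter_relaxedKernel_max Γ ψ hcomplete s₀).symm
  set φ : ℝ → ℝ := fun t => c (t / 2) / 2
  have hφ_mono : MonotoneOn φ (Ici 0) := fun a ha b hb hab =>
    div_le_div_of_nonneg_right (hc_mono (mem_Ici.mpr (div_nonneg ha two_pos.le))
      (mem_Ici.mpr (div_nonneg hb two_pos.le)) (div_le_div_of_nonneg_right hab two_pos.le))
      two_pos.le
  have hφ_pos : ∀ t, 0 < t → 0 < φ t := fun t ht => half_pos (hcpos _ (half_pos ht))
  have hgap : ∀ s, s₀ ≤ s → ∀ x ∈ (K s : Set H), ∀ y ∈ (K s : Set H),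
      φ ‖x - y‖ ≤ J x + J y - 2 * J (midpoint ℝ x y) := fun s hs x hx y hy =>
    hconv.modulus_le_midpoint_defect hJ' (K s₀).convex hmonot (hK_anti hs hx) (hK_anti hs hy)
  have hunique : ∀ s, s₀ ≤ s → ∀ S ⊆ (K s : Set H), Convex ℝ S → ∀ {x y}, x ∈ S → y ∈ S →
      IsMinOn J S x → IsMinOn J S y → x = y := fun s hs S hSK hS =>
    eq_of_isMinOn_of_modulus_le hφ_pos (fun x hx y hy => hgap s hs x (hSK hx) y (hSK hy)) hS
  have hbdd : BddBelow (J '' K s₀) := bddBelow_image_of_affine_le_of_growth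
    (fun u => by simpa using hconv.le_sub_of_tendsto_slope_along (hJ' 0 u)) hgrow
  choose ubs hubsK hubsmin using fun s => exists_isMinOn_of_modulus_le hφ_pos
    (hgap (max s₀ s) (le_max_left _ _)) hcont hφ_mono (isClosed_relaxedKernel Γ ψ _) (K _).convex
    ⟨0, (K _).zero_mem⟩ (hbdd.mono (image_mono (hK_anti (le_max_left _ s))))
  obtain ⟨ub, hubU, hubmin, hlim⟩ := exists_isMinOn_iInter_tendsto hcont hφ_mono hφ_pos
    (fun s t hst => hK_anti (max_le_max le_rfl hst)) (fun s => (K _).convex)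
    (fun s => isClosed_relaxedKernel Γ ψ _) (hgap _ (le_max_left _ _))
    ⟨0, hU_eq ▸ hU ▸ map_zero Γ⟩ hubsK hubsmin
  rw [← hU_eq] at hubU hubmin
  refine ⟨ub, ⟨hubU, hubmin⟩, fun w hw => ?_, ubs, fun s hs => ?_, hlim,
    (hcont.tendsto ub).comp hlim⟩
  · exact hunique _ (le_max_left s₀ 0) U (hU_eq ▸ iInter_subset _ 0)
      (hU_eq ▸ convex_iInter fun s => (K _).convex) hw.1 hubU hw.2 hubmin
  · obtain ⟨hmem, hmin⟩ : ubs s ∈ (K s : Set H) ∧ IsMinOn J (K s) (ubs s) :=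
      by simpa only [max_eq_right hs] using And.intro (hubsK s) (hubsmin s)
    exact ⟨⟨hmem, hmin⟩, fun w hw => hunique s hs _ subset_rfl (K s).convex hw.1 hmem hw.2 hmin⟩

/-- Theorem 2 of the paper: under uniform monotonicity of the Gateaux derivative
`J'` and growth at infinity on some relaxed boundary-condition space `Ů_{s₀}`,
the unique minimizers `ū_s` of `J` on the spaces
`Ů_s = {u | ⟨ψⱼ, Γu⟩ = 0, 1 ≤ j ≤ s}` converge in norm to the unique minimizer
`ū` of `J` on `Ů = ker Γ`, and `J ū_s → J ū`. -/
theorem stmt10 {H V : Type*}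
    [NormedAddCommGroup H] [InnerProductSpace ℝ H] [CompleteSpace H]
    [NormedAddCommGroup V] [InnerProductSpace ℝ V] [CompleteSpace V]
    (Γ : H →L[ℝ] V)
    (ψ : ℕ → V)
    (hcomplete : Dense (Submodule.span ℝ (ψ '' {j | 1 ≤ j}) : Set V))
    (Us : ℕ → Set H)
    (hUs : ∀ s, Us s = {u : H | ∀ j, 1 ≤ j → j ≤ s → (inner ℝ (ψ j) (Γ u) : ℝ) = 0})
    (U : Set H) (hU : U = {u : H | Γ u = 0})
    (J : H → ℝ) (hconv : ConvexOn ℝ Set.univ J) (hcont : Continuous J)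
    (J' : H → H)
    (hJ' : ∀ u v : H,
      Tendsto (fun t : ℝ => (J (u + t • v) - J u) / t) (𝓝[≠] 0) (𝓝 (inner ℝ (J' u) v : ℝ)))
    (s₀ : ℕ)
    (hgrow : ∀ M : ℝ, ∃ R > (0:ℝ), ∀ u ∈ Us s₀, R ≤ ‖u‖ → M ≤ J u)
    (c : ℝ → ℝ) (hc_cont : ContinuousOn c (Set.Ici 0))
    (hc_mono : MonotoneOn c (Set.Ici 0)) (hc0 : c 0 = 0)
    (hcpos : ∀ t : ℝ, 0 < t → 0 < c t)
    (hmonot : ∀ u ∈ Us s₀, ∀ v ∈ Us s₀, c ‖u - v‖ ≤ (inner ℝ (J' u - J' v) (u - v) : ℝ)) :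
    ∃ ub : H, (ub ∈ U ∧ ∀ u ∈ U, J ub ≤ J u) ∧
      (∀ w, (w ∈ U ∧ ∀ u ∈ U, J w ≤ J u) → w = ub) ∧
      ∃ ubs : ℕ → H,
        (∀ s, s₀ ≤ s →
          (ubs s ∈ Us s ∧ ∀ u ∈ Us s, J (ubs s) ≤ J u) ∧
          (∀ w, (w ∈ Us s ∧ ∀ u ∈ Us s, J w ≤ J u) → w = ubs s)) ∧
        Tendsto ubs atTop (𝓝 ub) ∧
        Tendsto (fun s => J (ubs s)) atTop (𝓝 (J ub)) :=
  stmt10_general Γ ψ hcomplete Us hUs U hU J hconv hcont J' hJ' s₀ hgrow c hc_mono hcpos hmonot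
end

section
/- Fix N ≥ 1 and consider the real unknowns a₀, a₁, …, a_N, λ₀, λ_π subject to the system: (i) π + λ₀ + λ_π = 0; (ii) (π·n²/2)·a_n + λ₀ + (−1)^n·λ_π = 0 for each 1 ≤ n ≤ N; (iii) a₀/2 + Σ_{n=1}^N a_n = 0; (iv) a₀/2 + Σ_{n=1}^N (−1)^n·a_n = 0. Then this system has exactly one solution, given by λ₀ = λ_π = −π/2, a_n = (1 + (−1)^n)/n² for 1 ≤ n ≤ N (so a_n = 0 for odd n and a_n = 2/n² for even n), and a₀ = −Σ_{k=1}^{⌊N/2⌋} 1/k². -/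
/-!
Equation (ii) gives `a n = -2 (λ₀ + (-1)ⁿ λ_π) / (π n²)`. Subtracting (iv) from (iii) leaves
`∑ (1 - (-1)ⁿ) a n = 0`, in which the multipliers only enter through `λ₀ - λ_π`, multiplied by
`-(2/π) ∑ (1 - (-1)ⁿ) / n² ≠ 0`; so `λ₀ = λ_π`, and (i) gives both. Then `a n = (1 + (-1)ⁿ) / n²`
vanishes on odd modes, and the even modes `n = 2k` contribute `1 / (2k²)` to (iii).
-/

open Finset Real

lemma neg_one_pow_mul_one_add_neg_one_pow {R : Type*} [Ring R] (n : ℕ) :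
    (-1 : R) ^ n * (1 + (-1) ^ n) = 1 + (-1) ^ n := by
  rcases neg_one_pow_eq_or R n with h | h <;> simp [h]

lemma one_sub_neg_one_pow_mul_add {R : Type*} [Ring R] (n : ℕ) (x y : R) :
    (1 - (-1 : R) ^ n) * (x + (-1) ^ n * y) = (1 - (-1) ^ n) * (x - y) := by
  rcases neg_one_pow_eq_or R n with h | h <;> simp [h, sub_eq_add_neg]

lemma sum_Icc_one_add_neg_one_pow_mul {R : Type*} [Ring R] (f : ℕ → R) (N : ℕ) :
    ∑ n ∈ Icc 1 N, (1 + (-1 : R) ^ n) * f n = 2 * ∑ k ∈ Icc 1 (N / 2), f (2 * k) := by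
  induction N with
  | zero => simp
  | succ N ih =>
    rw [sum_Icc_succ_top (by omega), ih]
    rcases Nat.even_or_odd (N + 1) with heven | hodd
    · rw [show (N + 1) / 2 = N / 2 + 1 by grind, sum_Icc_succ_top (by omega), heven.neg_one_pow,
        show 2 * (N / 2 + 1) = N + 1 by grind, one_add_one_eq_two, mul_add]
    · rw [show (N + 1) / 2 = N / 2 by grind, hodd.neg_one_pow]
      simp

lemma sum_Icc_one_add_neg_one_pow_div_sq (N : ℕ) :
    ∑ n ∈ Icc 1 N, (1 + (-1 : ℝ) ^ n) / (n : ℝ) ^ 2 =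
      (∑ k ∈ Icc 1 (N / 2), 1 / (k : ℝ) ^ 2) / 2 := by
  have h := sum_Icc_one_add_neg_one_pow_mul (fun n : ℕ => 1 / (n : ℝ) ^ 2) N
  simp only [mul_one_div] at h
  rw [h, mul_sum, sum_div]
  refine sum_congr rfl fun k _ => ?_
  push_cast
  ring

lemma sum_Icc_one_sub_neg_one_pow_mul_pos {N : ℕ} (hN : 1 ≤ N) {f : ℕ → ℝ}
    (hf : ∀ n ∈ Icc 1 N, 0 < f n) : 0 < ∑ n ∈ Icc 1 N, (1 - (-1 : ℝ) ^ n) * f n := by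
  have h1 : 1 ∈ Icc 1 N := mem_Icc.2 ⟨le_rfl, hN⟩
  refine sum_pos' (fun n hn => mul_nonneg ?_ (hf n hn).le) ⟨1, h1, ?_⟩
  · rcases neg_one_pow_eq_or ℝ n with h | h <;> norm_num [h]
  · linarith [hf 1 h1]

lemma pi_mul_sq_div_two_mul_add_add_eq_zero_iff {n : ℕ} (hn : 1 ≤ n) (a l0 lpi : ℝ) :
    π * (n : ℝ) ^ 2 / 2 * a + l0 + (-1) ^ n * lpi = 0 ↔
      a = -(2 / π) * ((l0 + (-1) ^ n * lpi) * (1 / (n : ℝ) ^ 2)) := by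
  have : (n : ℝ) ≠ 0 := by positivity
  have := pi_pos.ne'
  constructor <;> intro h
  · field_simp; linarith
  · rw [h]; field_simp; ring

lemma eq_of_stationary_of_sum_eq_sum_neg_one_pow_mul {N : ℕ} (hN : 1 ≤ N) {a : ℕ → ℝ}
    {l0 lpi : ℝ}
    (hstat : ∀ n, 1 ≤ n → n ≤ N → π * (n : ℝ) ^ 2 / 2 * a n + l0 + (-1) ^ n * lpi = 0)
    (hsum : ∑ n ∈ Icc 1 N, a n = ∑ n ∈ Icc 1 N, (-1 : ℝ) ^ n * a n) : l0 = lpi := by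
  have hodd :
      -(2 / π) * (l0 - lpi) * ∑ n ∈ Icc 1 N, (1 - (-1 : ℝ) ^ n) * (1 / (n : ℝ) ^ 2) = 0 := by
    have hdiff : ∑ n ∈ Icc 1 N, (1 - (-1 : ℝ) ^ n) * a n = 0 := by
      simp only [sub_mul, one_mul, sum_sub_distrib, hsum, sub_self]
    rw [mul_sum, ← hdiff]
    refine sum_congr rfl fun n hn => ?_
    rw [(pi_mul_sq_div_two_mul_add_add_eq_zero_iff (mem_Icc.1 hn).1 (a n) l0 lpi).1
      (hstat n (mem_Icc.1 hn).1 (mem_Icc.1 hn).2)]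
    linear_combination (2 / π * (1 / (n : ℝ) ^ 2)) * one_sub_neg_one_pow_mul_add n l0 lpi
  have hpos := sum_Icc_one_sub_neg_one_pow_mul_pos hN (f := fun n => 1 / (n : ℝ) ^ 2)
    fun n hn => one_div_pos.2 (pow_pos (Nat.cast_pos.2 (mem_Icc.1 hn).1) 2)
  rcases mul_eq_zero.1 hodd with h | h
  · simpa [pi_ne_zero, sub_eq_zero] using h
  · exact absurd h hpos.ne'

lemma pi_mul_sq_div_two_mul_sub_pi_div_two_eq_zero_iff {n : ℕ} (hn : 1 ≤ n) (a : ℝ) :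
    π * (n : ℝ) ^ 2 / 2 * a + -π / 2 + (-1) ^ n * (-π / 2) = 0 ↔
      a = (1 + (-1) ^ n) / (n : ℝ) ^ 2 := by
  rw [pi_mul_sq_div_two_mul_add_add_eq_zero_iff hn]
  field_simp [pi_ne_zero]
  ring_nf

section

variable {N : ℕ} {a : ℕ → ℝ}

lemma sum_Icc_eq_of_eq_one_add_neg_one_pow_div_sq
    (ha : ∀ n, 1 ≤ n → n ≤ N → a n = (1 + (-1 : ℝ) ^ n) / (n : ℝ) ^ 2) :
    ∑ n ∈ Icc 1 N, a n = (∑ k ∈ Icc 1 (N / 2), 1 / (k : ℝ) ^ 2) / 2 := by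
  rw [← sum_Icc_one_add_neg_one_pow_div_sq]
  exact sum_congr rfl fun n hn => ha n (mem_Icc.1 hn).1 (mem_Icc.1 hn).2

lemma sum_Icc_neg_one_pow_mul_eq_of_eq_one_add_neg_one_pow_div_sq
    (ha : ∀ n, 1 ≤ n → n ≤ N → a n = (1 + (-1 : ℝ) ^ n) / (n : ℝ) ^ 2) :
    ∑ n ∈ Icc 1 N, (-1 : ℝ) ^ n * a n = ∑ n ∈ Icc 1 N, a n := by
  refine sum_congr rfl fun n hn => ?_
  rw [ha n (mem_Icc.1 hn).1 (mem_Icc.1 hn).2, mul_div_assoc', neg_one_pow_mul_one_add_neg_one_pow]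

end

/-- The Ritz–Lagrange system Eq.(6) of the paper for Problem 1 has exactly one
solution: `λ₀ = λ_π = -π/2`, `a_n = (1+(-1)ⁿ)/n²` for `1 ≤ n ≤ N`, and
`a₀ = -Σ_{k=1}^{⌊N/2⌋} 1/k²`. -/
theorem stmt14 (N : ℕ) (hN : 1 ≤ N) (a : ℕ → ℝ) (l0 lpi : ℝ) :
    ((π + l0 + lpi = 0) ∧
     (∀ n, 1 ≤ n → n ≤ N → π * (n : ℝ) ^ 2 / 2 * a n + l0 + (-1:ℝ) ^ n * lpi = 0) ∧
     (a 0 / 2 + ∑ n ∈ Icc 1 N, a n = 0) ∧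
     (a 0 / 2 + ∑ n ∈ Icc 1 N, (-1:ℝ) ^ n * a n = 0))
    ↔
    (l0 = -π / 2 ∧ lpi = -π / 2 ∧
     (∀ n, 1 ≤ n → n ≤ N → a n = (1 + (-1:ℝ) ^ n) / (n : ℝ) ^ 2) ∧
     a 0 = -∑ k ∈ Icc 1 (N / 2), 1 / (k : ℝ) ^ 2) := by
  constructor
  · rintro ⟨h0, hstat, hsum, halt⟩
    have hl := eq_of_stationary_of_sum_eq_sum_neg_one_pow_mul hN hstat (by linarith)
    obtain ⟨rfl, rfl⟩ : l0 = -π / 2 ∧ lpi = -π / 2 := ⟨by linarith, by linarith⟩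
    have ha : ∀ n, 1 ≤ n → n ≤ N → a n = (1 + (-1:ℝ) ^ n) / (n : ℝ) ^ 2 := fun n hn hnN =>
      (pi_mul_sq_div_two_mul_sub_pi_div_two_eq_zero_iff hn (a n)).1 (hstat n hn hnN)
    exact ⟨rfl, rfl, ha, by linarith [sum_Icc_eq_of_eq_one_add_neg_one_pow_div_sq ha]⟩
  · rintro ⟨rfl, rfl, ha, ha0⟩
    have hsum := sum_Icc_eq_of_eq_one_add_neg_one_pow_div_sq ha
    have halt := sum_Icc_neg_one_pow_mul_eq_of_eq_one_add_neg_one_pow_div_sq ha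
    refine ⟨by ring, fun n hn hnN =>
      (pi_mul_sq_div_two_mul_sub_pi_div_two_eq_zero_iff hn (a n)).2 (ha n hn hnN), ?_, ?_⟩ <;>
      rw [ha0] <;> linarith
end

section
/- For every x ∈ [0,π] the series Σ_{n=1}^∞ ((1 + (−1)^n)/n⁴)·cos(n·x) converges, and π⁴/720 − Σ_{n=1}^∞ ((1 + (−1)^n)/n⁴)·cos(n·x) = x⁴/24 − π·x³/12 + π²·x²/24. -/
/-!
Only even indices `n = 2m` contribute, each with weight `2 / (2m)⁴`, so the series is
`(1/8) Σ_{m ≥ 1} cos (2 m x) / m⁴`. With `y = x / π ∈ [0, 1]` this is the Fourier series of the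
Bernoulli polynomial `B₄ y = y⁴ - 2 y³ + y² - 1/30`, namely `Σ cos (2 π m y) / m⁴ = -(π⁴/3) B₄ y`,
and the identity is that closed form rewritten in `x`.
-/

open Real

theorem Polynomial.eval_map_bernoulli_four {K : Type*} [Field K] [CharZero K] (t : K) :
    ((bernoulli 4).map (algebraMap ℚ K)).eval t = t ^ 4 - 2 * t ^ 3 + t ^ 2 - 1 / 30 := by
  have b3 : _root_.bernoulli 3 = 0 := by rw [_root_.bernoulli, bernoulli'_three]; norm_num
  have b4 : _root_.bernoulli 4 = -1 / 30 := by rw [_root_.bernoulli, bernoulli'_four]; norm_num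
  simp only [Polynomial.bernoulli, Finset.sum_range_succ, Finset.sum_range_zero, Nat.choose,
    bernoulli_two, b3, b4]
  norm_num
  ring

theorem hasSum_one_add_neg_one_pow_mul {R : Type*} [Ring R] [TopologicalSpace R]
    [IsTopologicalRing R] {f : ℕ → R} {a : R} (h : HasSum (fun m => f (2 * m)) a) :
    HasSum (fun n => (1 + (-1) ^ n) * f n) (2 * a) := by
  have hodd : ∀ n ∉ Set.range (2 * ·), (1 + (-1 : R) ^ n) * f n = 0 := by
    intro n hn
    have : Odd n := Nat.not_even_iff_odd.mp fun ⟨m, hm⟩ => hn ⟨m, by simp [hm, two_mul]⟩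
    simp [this.neg_one_pow]
  refine ((mul_right_injective₀ two_ne_zero).hasSum_iff hodd).mp
    ((h.mul_left 2).congr_fun fun m => ?_)
  simp [pow_mul, one_add_one_eq_two]

theorem hasSum_one_div_nat_pow_four_mul_cos_two_mul {x : ℝ} (hx : x ∈ Set.Icc 0 π) :
    HasSum (fun n : ℕ => 1 / (n : ℝ) ^ 4 * cos (2 * n * x))
      (π ^ 4 / 90 - π ^ 2 * x ^ 2 / 3 + 2 * π * x ^ 3 / 3 - x ^ 4 / 3) := by
  have hxπ : x / π ∈ Set.Icc (0 : ℝ) 1 :=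
    ⟨div_nonneg hx.1 pi_pos.le, (div_le_one pi_pos).mpr hx.2⟩
  convert hasSum_one_div_nat_pow_mul_cos (k := 2) two_ne_zero hxπ using 1
  · ext n
    field_simp [pi_ne_zero]
  · rw [Polynomial.eval_map_bernoulli_four]
    simp only [Nat.factorial, Nat.reduceMul, Nat.reduceAdd]
    field_simp
    ring

/-- Eq.(11) of the paper: the cosine series identity
`π⁴/720 - Σ_{n≥1} ((1+(-1)ⁿ)/n⁴) cos (n x) = x⁴/24 - π x³/12 + π² x²/24` on `[0,π]`. -/
theorem stmt15 :
    ∀ x ∈ Set.Icc (0:ℝ) π,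
      Summable (fun n : ℕ =>
        ((1 + (-1:ℝ) ^ (n + 1)) / ((n : ℝ) + 1) ^ 4) * cos (((n : ℝ) + 1) * x)) ∧
      π ^ 4 / 720 - ∑' n : ℕ,
          ((1 + (-1:ℝ) ^ (n + 1)) / ((n : ℝ) + 1) ^ 4) * cos (((n : ℝ) + 1) * x)
        = x ^ 4 / 24 - π * x ^ 3 / 12 + π ^ 2 * x ^ 2 / 24 := by
  intro x hx
  set f : ℕ → ℝ := fun n => 1 / (n : ℝ) ^ 4 * cos (n * x)
  have hevens : HasSum (fun m => f (2 * m))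
      ((π ^ 4 / 90 - π ^ 2 * x ^ 2 / 3 + 2 * π * x ^ 3 / 3 - x ^ 4 / 3) / 16) :=
    ((hasSum_one_div_nat_pow_four_mul_cos_two_mul hx).div_const 16).congr_fun fun m => by
      simp only [f]; push_cast; ring
  have hall := hasSum_one_add_neg_one_pow_mul hevens
  have hsum := ((hasSum_nat_add_iff' (f := fun n => (1 + (-1) ^ n) * f n) 1).mpr hall).congr_fun
    fun n => show ((1 + (-1:ℝ) ^ (n + 1)) / ((n : ℝ) + 1) ^ 4) * cos (((n : ℝ) + 1) * x) = _ by
      simp only [f]; push_cast; ring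
  refine ⟨hsum.summable, ?_⟩
  rw [hsum.tsum_eq]
  -- the `n = 0` term of `hall` vanishes because `1 / 0 ^ 4 = 0`
  simp only [Finset.sum_range_one, pow_zero, Nat.cast_zero, f]
  norm_num
  ring
end

section
/- Define u : (0,1] → ℝ by u(r) := cos 1 − cos r + Σ_{i=1}^∞ (−1)^i·(r^{2i} − 1)/((2i)·(2i)!). Then the series converges for every r ∈ (0,1], u(1) = 0, u is twice differentiable on (0,1], and u''(r) + u'(r)/r = cos r for all r ∈ (0,1]. -/
/-!
Write `u r = cos 1 - cos r + S r`. On `(-R, R)` the derivative series of `S` is dominated termwise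
by its absolutely convergent values at `R`, so `S` may be differentiated termwise:
`S' r = ∑ (-1)^(n+1) r^(2n+1)/(2n+2)!`, the Taylor series of `cos r - 1` divided by `r`.
Hence `r u'(r) = r sin r + cos r - 1`, and differentiating once more gives `(r u')' = r cos r`,
i.e. `u'' + u'/r = cos r`.
-/

open Real

/-- `∑' n, cinTerm n x = Cin 1 - Cin x`, where `Cin x = ∫₀ˣ (1 - cos t)/t dt`. -/
noncomputable def cinTerm (n : ℕ) (x : ℝ) : ℝ :=
  (-1:ℝ) ^ (n + 1) * (x ^ (2 * (n + 1)) - 1) /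
    ((2 * (n + 1) : ℕ) * ((2 * (n + 1)).factorial : ℝ))

noncomputable def cinTermDeriv (n : ℕ) (x : ℝ) : ℝ :=
  (-1:ℝ) ^ (n + 1) * x ^ (2 * n + 1) / ((2 * (n + 1)).factorial : ℝ)

lemma hasDerivAt_cinTerm (n : ℕ) (x : ℝ) : HasDerivAt (cinTerm n) (cinTermDeriv n x) x := by
  have h := (((hasDerivAt_pow (2 * (n + 1)) x).sub_const 1).const_mul ((-1:ℝ) ^ (n + 1))).div_const
    ((2 * (n + 1) : ℕ) * ((2 * (n + 1)).factorial : ℝ))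
  refine h.congr_deriv ?_
  rw [cinTermDeriv, show 2 * (n + 1) - 1 = 2 * n + 1 by omega]
  field_simp

lemma hasSum_cinTermDeriv {x : ℝ} (hx : x ≠ 0) :
    HasSum (fun n => cinTermDeriv n x) ((cos x - 1) / x) := by
  have hcos : HasSum (fun n => (-1:ℝ) ^ (n + 1) * x ^ (2 * (n + 1)) / (2 * (n + 1)).factorial)
      (cos x - 1) := by
    simpa using (hasSum_nat_add_iff' 1).mpr (Real.hasSum_cos x)
  refine (hcos.div_const x).congr_fun fun n => ?_
  rw [cinTermDeriv, show 2 * (n + 1) = 2 * n + 1 + 1 by ring, pow_succ x (2 * n + 1)]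
  field_simp

lemma norm_cinTermDeriv_le (n : ℕ) {x y : ℝ} (h : |y| ≤ |x|) :
    ‖cinTermDeriv n y‖ ≤ ‖cinTermDeriv n x‖ := by
  simp only [cinTermDeriv, norm_div, norm_mul, norm_pow, Real.norm_eq_abs]
  gcongr

lemma summable_cinTerm_and_hasDerivAt_tsum (x : ℝ) :
    Summable (fun n => cinTerm n x) ∧
      HasDerivAt (fun z => ∑' n, cinTerm n z) (∑' n, cinTermDeriv n x) x := by
  set R := |x| + 2
  have hR : R ≠ 0 := by positivity
  have hbound : ∀ n y, y ∈ Set.Ioo (-R) R → ‖cinTermDeriv n y‖ ≤ ‖cinTermDeriv n R‖ :=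
    fun n y hy => norm_cinTermDeriv_le n <| by
      rw [abs_of_pos (by positivity : 0 < R)]
      exact (abs_lt.2 hy).le
  have hsum : Summable (fun n => ‖cinTermDeriv n R‖) := (hasSum_cinTermDeriv hR).summable.norm
  have hderiv : ∀ n y, y ∈ Set.Ioo (-R) R → HasDerivAt (cinTerm n) (cinTermDeriv n y) y :=
    fun n y _ => hasDerivAt_cinTerm n y
  have h1 : (1:ℝ) ∈ Set.Ioo (-R) R := ⟨by linarith [abs_nonneg x], by linarith [abs_nonneg x]⟩
  have hx : x ∈ Set.Ioo (-R) R := abs_lt.1 (by linarith)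
  have hsum1 : Summable (fun n => cinTerm n 1) := by simp [cinTerm]
  exact ⟨summable_of_summable_hasDerivAt_of_isPreconnected hsum isOpen_Ioo isPreconnected_Ioo
      hderiv hbound h1 hsum1 hx,
    hasDerivAt_tsum_of_isPreconnected hsum isOpen_Ioo isPreconnected_Ioo hderiv hbound h1 hsum1 hx⟩

lemma hasDerivAt_tsum_cinTerm {x : ℝ} (hx : x ≠ 0) :
    HasDerivAt (fun z => ∑' n, cinTerm n z) ((cos x - 1) / x) x :=
  (hasSum_cinTermDeriv hx).tsum_eq ▸ (summable_cinTerm_and_hasDerivAt_tsum x).2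

/-- Eq.(17) of the paper: the radial function
`u r = cos 1 - cos r + Σ_{i≥1} (-1)ⁱ (r^{2i} - 1)/((2i)(2i)!)` satisfies `u 1 = 0`
and solves `u'' + u'/r = cos r` on `(0,1]` (the radial Poisson problem of
Problem 4). -/
theorem stmt16 (u : ℝ → ℝ)
    (hu : ∀ r : ℝ, u r = cos 1 - cos r +
      ∑' i : ℕ, (-1:ℝ) ^ (i + 1) * (r ^ (2 * (i + 1)) - 1) /
        ((2 * (i + 1) : ℕ) * ((2 * (i + 1)).factorial : ℝ))) :
    (∀ r ∈ Set.Ioc (0:ℝ) 1,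
      Summable (fun i : ℕ => (-1:ℝ) ^ (i + 1) * (r ^ (2 * (i + 1)) - 1) /
        ((2 * (i + 1) : ℕ) * ((2 * (i + 1)).factorial : ℝ)))) ∧
    u 1 = 0 ∧
    ∃ u' u'' : ℝ → ℝ, ∀ r ∈ Set.Ioc (0:ℝ) 1,
      HasDerivAt u (u' r) r ∧ HasDerivAt u' (u'' r) r ∧
      u'' r + u' r / r = cos r := by
  have hu_eq : u = fun r => cos 1 - cos r + ∑' n, cinTerm n r := funext hu
  refine ⟨fun r _ => (summable_cinTerm_and_hasDerivAt_tsum r).1, by simp [hu],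
    fun r => sin r + (cos r - 1) / r,
    fun r => cos r - sin r / r - (cos r - 1) / r ^ 2, fun r hr => ?_⟩
  have hr : r ≠ 0 := hr.1.ne'
  refine ⟨?_, ?_, by field_simp; ring⟩
  · have hcos : HasDerivAt (fun x => cos 1 - cos x) (sin r) r := by
      simpa using (hasDerivAt_cos r).const_sub (cos 1)
    exact hu_eq ▸ hcos.add (hasDerivAt_tsum_cinTerm hr)
  · refine ((hasDerivAt_sin r).add
      (((hasDerivAt_cos r).sub_const 1).div (hasDerivAt_id' r) hr)).congr_deriv ?_
    field_simp
    ring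
end
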